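/- arXiv:2002.00719 — 6 statements merged into one kernel-verified Lean document; each statement's English description precedes it below -/
import Mathlib

section
/- Let Λ be a finitely generated group with finite symmetric generating set S acting transitively on a set X, let p ≥ 1, and let f ∈ ℓ^p(Λ). For x ∈ X define f_x(y) = (Σ_{λ : λ·x = y} |f(λ)|^p)^{1/p}. Then for all x₀, x₁ ∈ X, ‖f_{x₀} − f_{x₁}‖_p ≤ d_S(x₀,x₁) · ‖∇^r_S f‖_p, where d_S is the Schreier graph metric on X and ‖∇^r_S f‖_p^p = Σ_{λ∈Λ, s∈S} |f(λ) − f(λs)|^p. -/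
/-- The Schreier graph metric on a transitive `Λ`-set induced by a finite symmetric
generating set `S`. -/
noncomputable def schreierDist {Λ : Type*} [Group Λ] {X : Type*} [MulAction Λ X]
    (S : Finset Λ) (x y : X) : ℕ :=
  sInf {n : ℕ | ∃ l : List Λ, l.length = n ∧ (∀ u ∈ l, u ∈ S ∨ u⁻¹ ∈ S) ∧ l.prod • x = y}

/-!
Summing the fibrewise `ℓ^p` norms of `f` over `X` recovers `‖f‖_p`, and the reverse triangle
inequality on each fibre makes `f ↦ f_x` a `1`-Lipschitz map `ℓ^p(Λ) → ℓ^p(X)`. Since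
`f_{u • x} = (f(· u⁻¹))_x`, crossing one Schreier edge moves `f_x` by at most
`‖f(· u⁻¹) - f‖_p ≤ ‖∇^r_S f‖_p`; the triangle inequality in `ℓ^p(X)` along a shortest
path from `x₀` to `x₁` then gives the bound.
-/

section RealLp

variable {ι : Type*} {p : ℝ}

theorem memℓp_ofReal_iff (hp : 0 < p) {f : ι → ℝ} :
    Memℓp f (ENNReal.ofReal p) ↔ Summable fun i => |f i| ^ p := by
  rw [memℓp_gen_iff (by rwa [ENNReal.toReal_ofReal hp.le]), ENNReal.toReal_ofReal hp.le]
  simp only [Real.norm_eq_abs]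

theorem lp.norm_mk_ofReal (hp : 0 < p) {f : ι → ℝ} (hf : Memℓp f (ENNReal.ofReal p)) :
    ‖(⟨f, hf⟩ : lp (fun _ : ι => ℝ) (ENNReal.ofReal p))‖ = (∑' i, |f i| ^ p) ^ (1 / p) := by
  rw [lp.norm_eq_tsum_rpow (by rwa [ENNReal.toReal_ofReal hp.le]), ENNReal.toReal_ofReal hp.le]
  rfl

theorem summable_abs_sub_rpow (hp : 0 < p) {f g : ι → ℝ}
    (hf : Summable fun i => |f i| ^ p) (hg : Summable fun i => |g i| ^ p) :
    Summable fun i => |f i - g i| ^ p :=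
  (memℓp_ofReal_iff hp).1 (((memℓp_ofReal_iff hp).2 hf).sub ((memℓp_ofReal_iff hp).2 hg))

theorem abs_tsum_rpow_sub_le (hp : 1 ≤ p) {f g : ι → ℝ}
    (hf : Summable fun i => |f i| ^ p) (hg : Summable fun i => |g i| ^ p) :
    |(∑' i, |f i| ^ p) ^ (1 / p) - (∑' i, |g i| ^ p) ^ (1 / p)|
      ≤ (∑' i, |f i - g i| ^ p) ^ (1 / p) := by
  have hp0 : 0 < p := one_pos.trans_le hp
  have : Fact (1 ≤ ENNReal.ofReal p) := ⟨ENNReal.one_le_ofReal.2 hp⟩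
  have hf' := (memℓp_ofReal_iff hp0).2 hf
  have hg' := (memℓp_ofReal_iff hp0).2 hg
  set F : lp (fun _ : ι => ℝ) (ENNReal.ofReal p) := ⟨f, hf'⟩
  set G : lp (fun _ : ι => ℝ) (ENNReal.ofReal p) := ⟨g, hg'⟩
  have hFG : F - G = ⟨f - g, hf'.sub hg'⟩ := rfl
  have h := abs_norm_sub_norm_le F G
  rwa [hFG, lp.norm_mk_ofReal hp0, lp.norm_mk_ofReal hp0, lp.norm_mk_ofReal hp0] at h

end RealLp

section Fiber

variable {Λ : Type*} [Group Λ] {X : Type*} [MulAction Λ X] {p : ℝ}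

/-- The function `f_x : X → ℝ` of the statement. -/
noncomputable def fiberNorm (p : ℝ) (f : Λ → ℝ) (x y : X) : ℝ :=
  (∑' l : {l : Λ // l • x = y}, |f l.1| ^ p) ^ (1 / p)

theorem fiberNorm_nonneg (f : Λ → ℝ) (x y : X) : 0 ≤ fiberNorm p f x y :=
  Real.rpow_nonneg (tsum_nonneg fun _ => Real.rpow_nonneg (abs_nonneg _) _) _

theorem abs_fiberNorm_rpow (hp : 0 < p) (f : Λ → ℝ) (x y : X) :
    |fiberNorm p f x y| ^ p = ∑' l : {l : Λ // l • x = y}, |f l.1| ^ p := by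
  rw [abs_of_nonneg (fiberNorm_nonneg f x y), fiberNorm, one_div,
    Real.rpow_inv_rpow (tsum_nonneg fun _ => Real.rpow_nonneg (abs_nonneg _) _) hp.ne']

theorem hasSum_abs_fiberNorm_rpow (hp : 0 < p) {f : Λ → ℝ} (hf : Summable fun l => |f l| ^ p)
    (x : X) : HasSum (fun y => |fiberNorm p f x y| ^ p) (∑' l, |f l| ^ p) := by
  have hsigma := (Equiv.sigmaFiberEquiv fun l : Λ => l • x).hasSum_iff.2 hf.hasSum
  simp_rw [abs_fiberNorm_rpow hp]
  exact hsigma.sigma fun y => (hf.subtype {l | l • x = y}).hasSum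

theorem memℓp_fiberNorm (hp : 0 < p) {f : Λ → ℝ} (hf : Summable fun l => |f l| ^ p) (x : X) :
    Memℓp (fiberNorm p f x) (ENNReal.ofReal p) :=
  (memℓp_ofReal_iff hp).2 (hasSum_abs_fiberNorm_rpow hp hf x).summable

theorem fiberNorm_smul (f : Λ → ℝ) (s : Λ) (x : X) :
    fiberNorm p f (s • x) = fiberNorm p (fun l => f (l * s⁻¹)) x := by
  funext y
  let e : {l : Λ // l • x = y} ≃ {l : Λ // l • s • x = y} :=
    { toFun := fun l => ⟨l.1 * s⁻¹, by rw [mul_smul, inv_smul_smul, l.2]⟩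
      invFun := fun l => ⟨l.1 * s, by rw [mul_smul, l.2]⟩
      left_inv := fun l => by simp
      right_inv := fun l => by simp }
  exact congrArg (· ^ (1 / p)) (e.tsum_eq fun l => |f l.1| ^ p).symm

theorem abs_fiberNorm_sub_le (hp : 1 ≤ p) {f g : Λ → ℝ} (hf : Summable fun l => |f l| ^ p)
    (hg : Summable fun l => |g l| ^ p) (x y : X) :
    |fiberNorm p f x y - fiberNorm p g x y| ≤ fiberNorm p (f - g) x y :=
  abs_tsum_rpow_sub_le hp (hf.subtype {l | l • x = y}) (hg.subtype {l | l • x = y})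

theorem tsum_abs_fiberNorm_sub_rpow_le (hp : 1 ≤ p) {f g : Λ → ℝ}
    (hf : Summable fun l => |f l| ^ p) (hg : Summable fun l => |g l| ^ p) (x : X) :
    ∑' y, |fiberNorm p f x y - fiberNorm p g x y| ^ p ≤ ∑' l, |f l - g l| ^ p := by
  have hp0 : 0 < p := one_pos.trans_le hp
  have hpointwise : ∀ y, |fiberNorm p f x y - fiberNorm p g x y| ^ p
      ≤ |fiberNorm p (f - g) x y| ^ p := fun y => by
    rw [abs_of_nonneg (fiberNorm_nonneg _ _ _)]
    exact Real.rpow_le_rpow (abs_nonneg _) (abs_fiberNorm_sub_le hp hf hg x y) hp0.le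
  have hsub := hasSum_abs_fiberNorm_rpow hp0 (summable_abs_sub_rpow hp0 hf hg) x
  calc _ ≤ ∑' y, |fiberNorm p (f - g) x y| ^ p :=
        Summable.tsum_le_tsum hpointwise (hsub.summable.of_nonneg_of_le
          (fun _ => Real.rpow_nonneg (abs_nonneg _) _) hpointwise) hsub.summable
    _ = _ := hsub.tsum_eq

end Fiber

section Gradient

variable {Λ : Type*} [Group Λ] {p : ℝ}

theorem summable_abs_sub_mul_rpow (hp : 0 < p) {f : Λ → ℝ} (hf : Summable fun l => |f l| ^ p)
    (s : Λ) : Summable fun l => |f l - f (l * s)| ^ p :=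
  summable_abs_sub_rpow hp hf ((Equiv.mulRight s).summable_iff.2 hf)

theorem tsum_abs_sub_mul_rpow_le_tsum_sum (hp : 0 < p) {f : Λ → ℝ}
    (hf : Summable fun l => |f l| ^ p) {S : Finset Λ} {t : Λ} (ht : t ∈ S) :
    ∑' l, |f l - f (l * t)| ^ p ≤ ∑' l, ∑ s ∈ S, |f l - f (l * s)| ^ p :=
  Summable.tsum_le_tsum
    (fun l => Finset.single_le_sum (f := fun s => |f l - f (l * s)| ^ p)
      (fun _ _ => Real.rpow_nonneg (abs_nonneg _) _) ht)
    (summable_abs_sub_mul_rpow hp hf t) (summable_sum fun s _ => summable_abs_sub_mul_rpow hp hf s)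

theorem tsum_abs_fiberNorm_smul_sub_rpow_le {X : Type*} [MulAction Λ X] (hp : 1 ≤ p) {f : Λ → ℝ}
    (hf : Summable fun l => |f l| ^ p) {S : Finset Λ} {u : Λ} (hu : u ∈ S ∨ u⁻¹ ∈ S) (x : X) :
    ∑' y, |fiberNorm p f (u • x) y - fiberNorm p f x y| ^ p
      ≤ ∑' l, ∑ s ∈ S, |f l - f (l * s)| ^ p := by
  have hp0 : 0 < p := one_pos.trans_le hp
  rw [fiberNorm_smul]
  refine (tsum_abs_fiberNorm_sub_rpow_le hp ((Equiv.mulRight u⁻¹).summable_iff.2 hf) hf x).trans ?_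
  rcases hu with hu | hu
  · calc ∑' l, |f (l * u⁻¹) - f l| ^ p = ∑' l, |f (l * u * u⁻¹) - f (l * u)| ^ p :=
          ((Equiv.mulRight u).tsum_eq fun l => |f (l * u⁻¹) - f l| ^ p).symm
      _ = ∑' l, |f l - f (l * u)| ^ p :=
          tsum_congr fun l => by rw [mul_inv_cancel_right, abs_sub_comm]
      _ ≤ _ := tsum_abs_sub_mul_rpow_le_tsum_sum hp0 hf hu
  · calc ∑' l, |f (l * u⁻¹) - f l| ^ p = ∑' l, |f l - f (l * u⁻¹)| ^ p :=
          tsum_congr fun l => by rw [abs_sub_comm]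
      _ ≤ _ := tsum_abs_sub_mul_rpow_le_tsum_sum hp0 hf hu

end Gradient

section Schreier

variable {Λ : Type*} [Group Λ] {X : Type*} [MulAction Λ X]

theorem exists_list_length_eq_schreierDist {S : Finset Λ}
    (hSgen : Subgroup.closure (S : Set Λ) = ⊤) (htrans : ∀ x y : X, ∃ g : Λ, g • x = y)
    (x y : X) :
    ∃ l : List Λ, l.length = schreierDist S x y ∧ (∀ u ∈ l, u ∈ S ∨ u⁻¹ ∈ S) ∧ l.prod • x = y := by
  suffices h : {n : ℕ | ∃ l : List Λ, l.length = n ∧ (∀ u ∈ l, u ∈ S ∨ u⁻¹ ∈ S)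
      ∧ l.prod • x = y}.Nonempty from Nat.sInf_mem h
  obtain ⟨g, rfl⟩ := htrans x y
  have hg : g ∈ Submonoid.closure ((S : Set Λ) ∪ (S : Set Λ)⁻¹) := by
    rw [← Subgroup.closure_toSubmonoid, hSgen]
    trivial
  obtain ⟨l, hl, rfl⟩ := Submonoid.exists_list_of_mem_closure hg
  exact ⟨l.length, l, rfl, hl, rfl⟩

theorem dist_list_prod_smul_le {E : Type*} [PseudoMetricSpace E] (Φ : X → E) {T : Set Λ} {C : ℝ}
    (hΦ : ∀ x, ∀ u ∈ T, dist (Φ (u • x)) (Φ x) ≤ C) (x : X) :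
    ∀ l : List Λ, (∀ u ∈ l, u ∈ T) → dist (Φ (l.prod • x)) (Φ x) ≤ l.length * C
  | [], _ => by simp
  | u :: l, hl => by
    rw [List.prod_cons, mul_smul, List.length_cons, Nat.cast_succ]
    calc _ ≤ dist (Φ (u • l.prod • x)) (Φ (l.prod • x)) + dist (Φ (l.prod • x)) (Φ x) :=
          dist_triangle _ _ _
      _ ≤ C + l.length * C :=
          add_le_add (hΦ _ u (hl u List.mem_cons_self))
            (dist_list_prod_smul_le Φ hΦ x l fun v hv => hl v (List.mem_cons_of_mem u hv))
      _ = (l.length + 1) * C := by ring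

theorem dist_le_schreierDist_mul {S : Finset Λ} (hSgen : Subgroup.closure (S : Set Λ) = ⊤)
    (htrans : ∀ x y : X, ∃ g : Λ, g • x = y) {E : Type*} [PseudoMetricSpace E] (Φ : X → E)
    {C : ℝ} (hΦ : ∀ x u, (u ∈ S ∨ u⁻¹ ∈ S) → dist (Φ (u • x)) (Φ x) ≤ C) (x y : X) :
    dist (Φ x) (Φ y) ≤ schreierDist S x y * C := by
  obtain ⟨l, hlen, hl, rfl⟩ := exists_list_length_eq_schreierDist hSgen htrans x y
  rw [dist_comm, ← hlen]
  exact dist_list_prod_smul_le Φ (T := {u | u ∈ S ∨ u⁻¹ ∈ S}) hΦ x l hl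

end Schreier

theorem pushforward_difference_le_gradient_general
    {Λ : Type*} [Group Λ] {X : Type*} [MulAction Λ X]
    (S : Finset Λ) (hSgen : Subgroup.closure (S : Set Λ) = ⊤)
    (htrans : ∀ x y : X, ∃ g : Λ, g • x = y)
    (p : ℝ) (hp : 1 ≤ p) (f : Λ → ℝ) (hf : Memℓp f (ENNReal.ofReal p))
    (x₀ x₁ : X) :
    (∑' y : X,
        |(∑' l : {l : Λ // l • x₀ = y}, |f l.1| ^ p) ^ (1 / p)
          - (∑' l : {l : Λ // l • x₁ = y}, |f l.1| ^ p) ^ (1 / p)| ^ p) ^ (1 / p)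
      ≤ (schreierDist S x₀ x₁ : ℝ) *
        (∑' l : Λ, ∑ s ∈ S, |f l - f (l * s)| ^ p) ^ (1 / p) := by
  have hp0 : 0 < p := one_pos.trans_le hp
  have : Fact (1 ≤ ENNReal.ofReal p) := ⟨ENNReal.one_le_ofReal.2 hp⟩
  have hfs := (memℓp_ofReal_iff hp0).1 hf
  let Φ : X → lp (fun _ : X => ℝ) (ENNReal.ofReal p) :=
    fun x => ⟨fiberNorm p f x, memℓp_fiberNorm hp0 hfs x⟩
  have hdist : ∀ x x', dist (Φ x) (Φ x')
      = (∑' y, |fiberNorm p f x y - fiberNorm p f x' y| ^ p) ^ (1 / p) := fun x x' =>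
    (dist_eq_norm _ _).trans (lp.norm_mk_ofReal hp0 _)
  have hedge : ∀ x u, (u ∈ S ∨ u⁻¹ ∈ S) →
      dist (Φ (u • x)) (Φ x) ≤ (∑' l, ∑ s ∈ S, |f l - f (l * s)| ^ p) ^ (1 / p) := by
    intro x u hu
    rw [hdist]
    exact Real.rpow_le_rpow (tsum_nonneg fun _ => Real.rpow_nonneg (abs_nonneg _) _)
      (tsum_abs_fiberNorm_smul_sub_rpow_le hp hfs hu x) (by positivity)
  have h := dist_le_schreierDist_mul hSgen htrans Φ hedge x₀ x₁
  rwa [hdist] at h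

/-- Let `Λ` act transitively on `X` with Schreier metric `d_S`, let `p ≥ 1`, `f ∈ ℓ^p(Λ)`
and `f_x(y) = (Σ_{λ : λ·x = y} |f(λ)|^p)^{1/p}`.  Then
`‖f_{x₀} − f_{x₁}‖_p ≤ d_S(x₀,x₁) · ‖∇^r_S f‖_p`, where
`‖∇^r_S f‖_p^p = Σ_{λ ∈ Λ, s ∈ S} |f(λ) − f(λ s)|^p`. -/
theorem pushforward_difference_le_gradient
    {Λ : Type*} [Group Λ] {X : Type*} [MulAction Λ X]
    (S : Finset Λ) (hSgen : Subgroup.closure (S : Set Λ) = ⊤)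
    (hSsymm : ∀ s ∈ S, s⁻¹ ∈ S)
    (htrans : ∀ x y : X, ∃ g : Λ, g • x = y)
    (p : ℝ) (hp : 1 ≤ p) (f : Λ → ℝ) (hf : Memℓp f (ENNReal.ofReal p))
    (x₀ x₁ : X) :
    (∑' y : X,
        |(∑' l : {l : Λ // l • x₀ = y}, |f l.1| ^ p) ^ (1 / p)
          - (∑' l : {l : Λ // l • x₁ = y}, |f l.1| ^ p) ^ (1 / p)| ^ p) ^ (1 / p)
      ≤ (schreierDist S x₀ x₁ : ℝ) *
        (∑' l : Λ, ∑ s ∈ S, |f l - f (l * s)| ^ p) ^ (1 / p) :=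
  pushforward_difference_le_gradient_general S hSgen htrans p hp f hf x₀ x₁
end

section
/- Let φ : (0,∞) → (0,∞) be such that φ and t ↦ t/φ(t) are non-decreasing. Let Λ act transitively on a set X with Schreier metric d_S for a finite symmetric generating set S. Let f be a finitely supported function on Λ with ‖∇^r_S f‖₁ = 1, and for x ∈ X set f_x(y) = Σ_{λ : λ·x = y} |f(λ)|. Then for all x₀, x₁ ∈ X, ‖f‖₁ / ‖f_{x₀} − f_{x₁}‖₁ ≥ φ(‖f‖₁) / (2 φ(d_S(x₀,x₁))). -/
section FiberSum

variable {α α' β : Type*}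

/-- The pushforward of `h` along `g`; the paper's `f_x` is `fiberSum (· • x) (|f ·|)`. -/
noncomputable def fiberSum (g : α → β) (h : α → ℝ) (y : β) : ℝ :=
  ∑' a : {a // g a = y}, h a

theorem hasSum_fiberSum (g : α → β) {h : α → ℝ} (hh : Summable h) :
    HasSum (fiberSum g h) (∑' a, h a) :=
  hh.hasSum.tsum_fiberwise g

theorem summable_fiberSum (g : α → β) {h : α → ℝ} (hh : Summable h) :
    Summable (fiberSum g h) :=
  (hasSum_fiberSum g hh).summable

theorem fiberSum_comp_equiv (g : α' → β) (e : α ≃ α') (h : α → ℝ) :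
    fiberSum (g ∘ e) h = fiberSum g (h ∘ e.symm) := by
  funext y
  unfold fiberSum
  simpa using (e.subtypeEquiv fun a => Iff.rfl).tsum_eq
    (fun b : {b // g b = y} => h (e.symm b))

theorem fiberSum_sub (g : α → β) {h h' : α → ℝ} (hh : Summable h) (hh' : Summable h') :
    fiberSum g (h - h') = fiberSum g h - fiberSum g h' :=
  funext fun y => (hh.subtype {a | g a = y}).tsum_sub (hh'.subtype _)

theorem abs_fiberSum_le (g : α → β) {h : α → ℝ} (hh : Summable h) (y : β) :
    |fiberSum g h y| ≤ fiberSum g (fun a => |h a|) y := by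
  simpa only [Real.norm_eq_abs, fiberSum] using
    norm_tsum_le_tsum_norm (f := fun a : {a // g a = y} => h a) (hh.abs.subtype {a | g a = y})

theorem tsum_abs_fiberSum_le (g : α → β) {h : α → ℝ} (hh : Summable h) :
    ∑' y, |fiberSum g h y| ≤ ∑' a, |h a| :=
  (summable_fiberSum g hh).abs.tsum_le_tsum (abs_fiberSum_le g hh)
    (summable_fiberSum g hh.abs) |>.trans_eq (hasSum_fiberSum g hh.abs).tsum_eq

theorem tsum_abs_fiberSum_sub_le (g : α → β) {h h' : α → ℝ} (hh : Summable h)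
    (hh' : Summable h') :
    ∑' y, |fiberSum g h y - fiberSum g h' y| ≤ ∑' a, |h a - h' a| := by
  have hdiff : Summable fun a => |h a - h' a| := (hh.sub hh').abs
  calc ∑' y, |fiberSum g h y - fiberSum g h' y|
      = ∑' y, |fiberSum g (h - h') y| := by rw [fiberSum_sub g hh hh']; rfl
    _ ≤ ∑' y, fiberSum g (fun a => |h a - h' a|) y :=
        (summable_fiberSum g (hh.sub hh')).abs.tsum_le_tsum
          (abs_fiberSum_le g (hh.sub hh')) (summable_fiberSum g hdiff)
    _ = ∑' a, |h a - h' a| := (hasSum_fiberSum g hdiff).tsum_eq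

end FiberSum

section L1

variable {β : Type*} {u v w : β → ℝ}

theorem tsum_abs_sub_le_tsum_abs_sub_add (hu : Summable u) (hv : Summable v)
    (hw : Summable w) :
    ∑' y, |u y - w y| ≤ ∑' y, |u y - v y| + ∑' y, |v y - w y| := by
  have huv := (hu.sub hv).abs
  have hvw := (hv.sub hw).abs
  rw [← huv.tsum_add hvw]
  exact (hu.sub hw).abs.tsum_le_tsum (fun y => abs_sub_le _ _ _) (huv.add hvw)

theorem tsum_abs_sub_le_tsum_abs_add (hu : Summable u) (hv : Summable v) :
    ∑' y, |u y - v y| ≤ ∑' y, |u y| + ∑' y, |v y| := by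
  rw [← hu.abs.tsum_add hv.abs]
  exact (hu.sub hv).abs.tsum_le_tsum (fun y => abs_sub _ _) (hu.abs.add hv.abs)

end L1

section Schreier

variable {Λ X : Type*} [Group Λ] [MulAction Λ X] {S : Finset Λ}

theorem exists_word_length_eq_schreierDist (hS : Subgroup.closure (S : Set Λ) = ⊤)
    {x y : X} (hxy : ∃ g : Λ, g • x = y) :
    ∃ l : List Λ, l.length = schreierDist S x y ∧ (∀ u ∈ l, u ∈ S ∨ u⁻¹ ∈ S) ∧
      l.prod • x = y := by
  show schreierDist S x y ∈ {n | ∃ l : List Λ, l.length = n ∧ (∀ u ∈ l, u ∈ S ∨ u⁻¹ ∈ S) ∧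
    l.prod • x = y}
  apply Nat.sInf_mem
  obtain ⟨g, rfl⟩ := hxy
  have hg : g ∈ Submonoid.closure ((S : Set Λ) ∪ (S : Set Λ)⁻¹) := by
    rw [← Subgroup.closure_toSubmonoid, hS]
    trivial
  obtain ⟨l, hl, rfl⟩ := Submonoid.exists_list_of_mem_closure hg
  exact ⟨l.length, l, rfl, hl, rfl⟩

theorem one_le_schreierDist (hS : Subgroup.closure (S : Set Λ) = ⊤) {x y : X}
    (hxy : ∃ g : Λ, g • x = y) (hne : x ≠ y) : 1 ≤ schreierDist S x y := by
  obtain ⟨l, hlen, -, hl⟩ := exists_word_length_eq_schreierDist hS hxy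
  rw [Nat.one_le_iff_ne_zero, ← hlen, Ne, List.length_eq_zero_iff]
  rintro rfl
  exact hne (by simpa using hl)

theorem le_mul_length_of_word (ρ : X → X → ℝ) {c : ℝ} (hρ_self : ∀ x, ρ x x = 0)
    (hρ_triangle : ∀ x y z, ρ x z ≤ ρ x y + ρ y z)
    (hρ_step : ∀ x u, u ∈ S ∨ u⁻¹ ∈ S → ρ x (u • x) ≤ c) (x : X) :
    ∀ l : List Λ, (∀ u ∈ l, u ∈ S ∨ u⁻¹ ∈ S) → ρ x (l.prod • x) ≤ c * l.length
  | [], _ => by simp [hρ_self]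
  | u :: t, hl => by
    have ht := le_mul_length_of_word ρ hρ_self hρ_triangle hρ_step x t
      fun v hv => hl v (List.mem_cons_of_mem u hv)
    have hu := hρ_step (t.prod • x) u (hl u List.mem_cons_self)
    have := hρ_triangle x (t.prod • x) (u • t.prod • x)
    rw [List.prod_cons, mul_smul, List.length_cons, Nat.cast_succ]
    linarith

theorem le_mul_schreierDist (ρ : X → X → ℝ) {c : ℝ} (hρ_self : ∀ x, ρ x x = 0)
    (hρ_triangle : ∀ x y z, ρ x z ≤ ρ x y + ρ y z)
    (hρ_step : ∀ x u, u ∈ S ∨ u⁻¹ ∈ S → ρ x (u • x) ≤ c)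
    (hS : Subgroup.closure (S : Set Λ) = ⊤) {x y : X} (hxy : ∃ g : Λ, g • x = y) :
    ρ x y ≤ c * schreierDist S x y := by
  obtain ⟨l, hlen, hlS, rfl⟩ := exists_word_length_eq_schreierDist hS hxy
  rw [← hlen]
  exact le_mul_length_of_word ρ hρ_self hρ_triangle hρ_step x l hlS

end Schreier

section Pushforward

variable {Λ X : Type*} [Group Λ] [MulAction Λ X]

theorem fiberSum_smul_smul (h : Λ → ℝ) (s : Λ) (x : X) :
    fiberSum (· • (s • x)) h = fiberSum (· • x) fun l => h (l * s⁻¹) := by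
  have : (· • (s • x)) = (· • x) ∘ Equiv.mulRight s := funext fun l => (mul_smul l s x).symm
  rw [this, fiberSum_comp_equiv]
  rfl

theorem tsum_abs_fiberSum_smul_sub_le {h : Λ → ℝ} (hh : Summable h) (x : X) (s : Λ) :
    ∑' y, |fiberSum (· • x) h y - fiberSum (· • (s • x)) h y| ≤ ∑' l, |h l - h (l * s⁻¹)| := by
  rw [fiberSum_smul_smul]
  exact tsum_abs_fiberSum_sub_le _ hh ((Equiv.mulRight s⁻¹).summable_iff.mpr hh)

theorem summable_abs_sub_mul {f : Λ → ℝ} (hf : Summable f) (s : Λ) :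
    Summable fun l => |f l - f (l * s)| :=
  (hf.sub ((Equiv.mulRight s).summable_iff.mpr hf)).abs

theorem tsum_abs_sub_mul_le_tsum_sum {f : Λ → ℝ} (hf : Summable f) {S : Finset Λ} {s : Λ}
    (hs : s ∈ S) :
    ∑' l, |f l - f (l * s)| ≤ ∑' l, ∑ t ∈ S, |f l - f (l * t)| :=
  (summable_abs_sub_mul hf s).tsum_le_tsum
    (fun l => Finset.single_le_sum (f := fun t => |f l - f (l * t)|)
      (fun _ _ => abs_nonneg _) hs)
    (summable_sum fun t _ => summable_abs_sub_mul hf t)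

theorem tsum_abs_fiberSum_abs_smul_sub_le {f : Λ → ℝ} (hf : Summable f) {S : Finset Λ}
    (x : X) {s : Λ} (hs : s⁻¹ ∈ S) :
    ∑' y, |fiberSum (· • x) (fun l => |f l|) y - fiberSum (· • (s • x)) (fun l => |f l|) y|
      ≤ ∑' l, ∑ t ∈ S, |f l - f (l * t)| :=
  calc _ ≤ ∑' l, |(|f l| - |f (l * s⁻¹)|)| := tsum_abs_fiberSum_smul_sub_le hf.abs x s
    _ ≤ ∑' l, |f l - f (l * s⁻¹)| :=
        (summable_abs_sub_mul hf.abs s⁻¹).tsum_le_tsum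
          (fun _ => abs_abs_sub_abs_le_abs_sub _ _) (summable_abs_sub_mul hf s⁻¹)
    _ ≤ _ := tsum_abs_sub_mul_le_tsum_sum hf hs

end Pushforward

theorem mul_le_two_mul_of_le_of_le {φ : ℝ → ℝ} (hφ_pos : ∀ t : ℝ, 0 < t → 0 < φ t)
    (hφ_mono : ∀ s t : ℝ, 0 < s → s ≤ t → φ s ≤ φ t)
    (hratio : ∀ s t : ℝ, 0 < s → s ≤ t → s / φ s ≤ t / φ t)
    {a b D : ℝ} (ha : 0 < a) (hb : 0 < b) (hDb : D ≤ b) (hDa : D ≤ 2 * a) :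
    φ a * D ≤ 2 * φ b * a := by
  have hφa := hφ_pos a ha
  have hφb := hφ_pos b hb
  rcases le_total a b with hab | hba
  · have := hφ_mono a b ha hab
    nlinarith
  · have := hratio b a hb hba
    rw [div_le_div_iff₀ hφb hφa] at this
    nlinarith

/-- Let `φ : (0,∞) → (0,∞)` with `φ` and `t ↦ t/φ(t)` non-decreasing.  Let `Λ` act
transitively on `X` with Schreier metric `d_S`.  Let `f` be finitely supported on `Λ`
with `‖∇^r_S f‖₁ = 1`, and `f_x(y) = Σ_{λ : λ·x = y} |f(λ)|`.  Then for `x₀ ≠ x₁`,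
`‖f‖₁ / ‖f_{x₀} − f_{x₁}‖₁ ≥ φ(‖f‖₁) / (2 φ(d_S(x₀,x₁)))`, stated here in the
equivalent cross-multiplied form. -/
theorem pushforward_l1_quantitative
    {Λ : Type*} [Group Λ] {X : Type*} [MulAction Λ X]
    (S : Finset Λ) (hSgen : Subgroup.closure (S : Set Λ) = ⊤)
    (hSsymm : ∀ s ∈ S, s⁻¹ ∈ S)
    (htrans : ∀ x y : X, ∃ g : Λ, g • x = y)
    (φ : ℝ → ℝ)
    (hφ_pos : ∀ t : ℝ, 0 < t → 0 < φ t)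
    (hφ_mono : ∀ s t : ℝ, 0 < s → s ≤ t → φ s ≤ φ t)
    (hratio : ∀ s t : ℝ, 0 < s → s ≤ t → s / φ s ≤ t / φ t)
    (f : Λ → ℝ) (hfin : (Function.support f).Finite)
    (hgrad : ∑' l : Λ, ∑ s ∈ S, |f l - f (l * s)| = 1)
    (x₀ x₁ : X) (hne : x₀ ≠ x₁) :
    φ (∑' l : Λ, |f l|) *
        (∑' y : X,
          |(∑' l : {l : Λ // l • x₀ = y}, |f l.1|)
            - (∑' l : {l : Λ // l • x₁ = y}, |f l.1|)|)
      ≤ 2 * φ (schreierDist S x₀ x₁ : ℝ) * (∑' l : Λ, |f l|) := by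
  have hf : Summable f := summable_of_hasFiniteSupport hfin
  let push : X → X → ℝ := fun x => fiberSum (· • x) fun l => |f l|
  have hpush : ∀ x, Summable (push x) := fun x => summable_fiberSum _ hf.abs
  let ρ : X → X → ℝ := fun x x' => ∑' y, |push x y - push x' y|
  have hD_le_d : ρ x₀ x₁ ≤ schreierDist S x₀ x₁ := by
    simpa using le_mul_schreierDist ρ (c := 1) (by simp [ρ])
      (fun x y z => tsum_abs_sub_le_tsum_abs_sub_add (hpush x) (hpush y) (hpush z))
      (fun x u hu =>
        (tsum_abs_fiberSum_abs_smul_sub_le hf x (hu.elim (hSsymm u) id)).trans_eq hgrad)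
      hSgen (htrans x₀ x₁)
  have hD_le_F : ρ x₀ x₁ ≤ 2 * ∑' l, |f l| := by
    have := (tsum_abs_sub_le_tsum_abs_add (hpush x₀) (hpush x₁)).trans
      (add_le_add (tsum_abs_fiberSum_le _ hf.abs) (tsum_abs_fiberSum_le _ hf.abs))
    simpa only [abs_abs, ← two_mul] using this
  have hF : 0 < ∑' l, |f l| := by
    obtain ⟨l, hl⟩ : ∃ l, f l ≠ 0 := by
      by_contra! h
      simp [h] at hgrad
    exact hf.abs.tsum_pos (fun _ => abs_nonneg _) l (abs_pos.mpr hl)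
  have hd : (1 : ℝ) ≤ schreierDist S x₀ x₁ := by
    exact_mod_cast one_le_schreierDist hSgen (htrans x₀ x₁) hne
  exact mul_le_two_mul_of_le_of_le hφ_pos hφ_mono hratio hF (by linarith) hD_le_d hD_le_F
end

section
/- For every positive integer n, the sequence F_k = {0, 2^k}^n ⊆ ℤ^n is a Følner tiling sequence: the tiles T_k defined by T₀ = F₀ and T_{k+1} = T_k + F_{k+1} satisfy T_k = {0,1,...,2^{k+1}−1}^n, each T_{k+1} is the disjoint union of the translates T_k + γ for γ ∈ F_{k+1}, T_k has diameter at most n·2^{k+1} in the standard word metric, and for every standard generator s of ℤ^n, |T_k \ (s + T_k)| ≤ 2^{−(k+1)} |T_k|. -/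
open Pointwise

/-- `F_k = {0, 2^k}^n ⊆ ℤ^n`. -/
def Fcube (n k : ℕ) : Set (Fin n → ℤ) := {v | ∀ i, v i = 0 ∨ v i = 2 ^ k}

/-- The tiles `T₀ = F₀`, `T_{k+1} = T_k + F_{k+1}`. -/
def Tcube (n : ℕ) : ℕ → Set (Fin n → ℤ)
  | 0 => Fcube n 0
  | (k + 1) => Tcube n k + Fcube n (k + 1)

lemma Tcube_eq (n k : ℕ) :
    Tcube n k = {v : Fin n → ℤ | ∀ i, 0 ≤ v i ∧ v i < 2 ^ (k + 1)} := by
  induction k with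
  | zero =>
    ext v
    simp only [Tcube, Fcube, Set.mem_setOf_eq]
    constructor
    · intro h i; rcases h i with h | h <;> simp [h] <;> norm_num
    · intro h i; have := h i; omega
  | succ k ih =>
    ext v
    have hpow : (2 : ℤ) ^ (k + 1 + 1) = 2 ^ (k + 1) + 2 ^ (k + 1) := by ring
    simp only [Tcube, ih, Set.mem_add, Set.mem_setOf_eq, Fcube]
    constructor
    · rintro ⟨x, hx, y, hy, rfl⟩ i
      have h1 := hx i
      have h2 := hy i
      simp only [Pi.add_apply]
      omega
    · intro h
      refine ⟨fun i => if v i < 2 ^ (k + 1) then v i else v i - 2 ^ (k + 1), ?_,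
        fun i => if v i < 2 ^ (k + 1) then 0 else 2 ^ (k + 1), ?_, ?_⟩
      · intro i; have := h i; dsimp only; split <;> omega
      · intro i; dsimp only; split <;> simp
      · funext i; have := h i; simp only [Pi.add_apply]; split <;> ring

lemma Tcube_coe (n k : ℕ) :
    Tcube n k =
      ↑(Fintype.piFinset fun _ : Fin n => Finset.Ico (0 : ℤ) (2 ^ (k + 1))) := by
  rw [Tcube_eq]
  ext v
  simp [Fintype.mem_piFinset, Finset.mem_Ico]

lemma card_Ico_pow (k : ℕ) :
    (Finset.Ico (0 : ℤ) (2 ^ (k + 1))).card = 2 ^ (k + 1) := by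
  rw [Int.card_Ico]
  have : ((2 : ℤ) ^ (k + 1)) - 0 = ((2 ^ (k + 1) : ℕ) : ℤ) := by push_cast; ring
  rw [this, Int.toNat_natCast]

lemma Tcube_ncard (n k : ℕ) : (Tcube n k).ncard = (2 ^ (k + 1)) ^ n := by
  rw [Tcube_coe, Set.ncard_coe_finset, Fintype.card_piFinset]
  simp only [card_Ico_pow, Finset.prod_const, Finset.card_univ, Fintype.card_fin]

lemma Tcube_finite (n k : ℕ) : (Tcube n k).Finite := by
  rw [Tcube_coe]; exact (Fintype.piFinset _).finite_toSet

lemma slice_ncard (n k : ℕ) (i : Fin n) (c : ℤ) (hc0 : 0 ≤ c)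
    (hc1 : c < 2 ^ (k + 1)) :
    2 ^ (k + 1) * ({v ∈ Tcube n k | v i = c}).ncard = (Tcube n k).ncard := by
  have hset : {v ∈ Tcube n k | v i = c} =
      ↑(Fintype.piFinset fun j : Fin n =>
        if j = i then ({c} : Finset ℤ) else Finset.Ico (0 : ℤ) (2 ^ (k + 1))) := by
    ext v
    simp only [Tcube_eq, Set.mem_setOf_eq, Finset.coe_sort_coe, Finset.mem_coe,
      Fintype.mem_piFinset, Set.mem_sep_iff]
    constructor
    · rintro ⟨h, hvi⟩ j
      by_cases hj : j = i
      · subst hj; simp [hvi]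
      · have := h j; simp [hj, Finset.mem_Ico]; omega
    · intro h
      constructor
      · intro j
        have := h j
        by_cases hj : j = i
        · subst hj; simp at this; omega
        · simp [hj, Finset.mem_Ico] at this; omega
      · have := h i; simpa using this
  rw [hset, Set.ncard_coe_finset, Fintype.card_piFinset, Tcube_ncard]
  have h1 : (∏ j : Fin n, (if j = i then ({c} : Finset ℤ)
      else Finset.Ico (0 : ℤ) (2 ^ (k + 1))).card) =
      ∏ j ∈ Finset.univ.erase i, 2 ^ (k + 1) := by
    rw [← Finset.mul_prod_erase (Finset.univ : Finset (Fin n))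
      (fun j => (if j = i then ({c} : Finset ℤ)
        else Finset.Ico (0 : ℤ) (2 ^ (k + 1))).card) (Finset.mem_univ i)]
    simp only [if_pos rfl, eq_self_iff_true, if_true, Finset.card_singleton, one_mul]
    apply Finset.prod_congr rfl
    intro j hj
    rw [if_neg (Finset.ne_of_mem_erase hj), card_Ico_pow]
  rw [h1]
  have h2 : (2 : ℕ) ^ (k + 1) * ∏ j ∈ Finset.univ.erase i, 2 ^ (k + 1) =
      ∏ _j : Fin n, 2 ^ (k + 1) :=
    Finset.mul_prod_erase Finset.univ (fun _ => 2 ^ (k + 1)) (Finset.mem_univ i)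
  rw [h2, Finset.prod_const, Finset.card_univ, Fintype.card_fin]

/-- The sequence `F_k = {0,2^k}^n` is a Følner tiling sequence for `ℤ^n`:
the tiles satisfy `T_k = {0,…,2^{k+1}−1}^n`, each `T_{k+1}` is the disjoint union of the
translates `T_k + γ` for `γ ∈ F_{k+1}`, `T_k` has diameter at most `n·2^{k+1}` in the
standard word (ℓ¹) metric, and `|T_k \ (s + T_k)| ≤ 2^{−(k+1)}·|T_k|` for every standard
generator `s` of `ℤ^n`. -/
theorem zn_folner_tiling (n : ℕ) (hn : 0 < n) :
    (∀ k : ℕ, Tcube n k = {v : Fin n → ℤ | ∀ i, 0 ≤ v i ∧ v i < 2 ^ (k + 1)}) ∧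
    (∀ k : ℕ, ∀ γ₁ ∈ Fcube n (k + 1), ∀ γ₂ ∈ Fcube n (k + 1), γ₁ ≠ γ₂ →
      Disjoint ((fun v => v + γ₁) '' Tcube n k) ((fun v => v + γ₂) '' Tcube n k)) ∧
    (∀ k : ℕ, ∀ v ∈ Tcube n k, ∀ w ∈ Tcube n k,
      (∑ i : Fin n, |v i - w i|) ≤ (n : ℤ) * 2 ^ (k + 1)) ∧
    (∀ k : ℕ, ∀ i : Fin n, ∀ s : Fin n → ℤ,
      (s = Pi.single i 1 ∨ s = -Pi.single i 1) →
      2 ^ (k + 1) * (Tcube n k \ ((fun v => s + v) '' Tcube n k)).ncard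
        ≤ (Tcube n k).ncard) := by
  refine ⟨Tcube_eq n, ?_, ?_, ?_⟩
  · -- disjointness
    intro k γ₁ hγ₁ γ₂ hγ₂ hne
    rw [Set.disjoint_left]
    rintro a ⟨v₁, hv₁, rfl⟩ ⟨v₂, hv₂, heq⟩
    apply hne
    funext i
    have h1 : v₂ i + γ₂ i = v₁ i + γ₁ i := congrFun heq i
    rw [Tcube_eq] at hv₁ hv₂
    have h2 := hv₁ i
    have h3 := hv₂ i
    have h4 := hγ₁ i
    have h5 := hγ₂ i
    omega
  · -- diameter
    intro k v hv w hw
    rw [Tcube_eq] at hv hw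
    calc (∑ i : Fin n, |v i - w i|) ≤ ∑ _i : Fin n, (2 : ℤ) ^ (k + 1) := by
          apply Finset.sum_le_sum
          intro i _
          have h1 := hv i
          have h2 := hw i
          rw [abs_le]
          omega
      _ = (n : ℤ) * 2 ^ (k + 1) := by
          rw [Finset.sum_const, Finset.card_univ, Fintype.card_fin, nsmul_eq_mul]
  · -- Følner condition
    intro k i s hs
    have hMpos : (0 : ℤ) < 2 ^ (k + 1) := by positivity
    obtain hs | hs := hs
    · -- s = Pi.single i 1 ; boundary has v i = 0
      subst hs
      have hsub : Tcube n k \ ((fun v => Pi.single i 1 + v) '' Tcube n k) ⊆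
          {v ∈ Tcube n k | v i = 0} := by
        rintro v ⟨hvT, hvN⟩
        refine ⟨hvT, ?_⟩
        by_contra hvi
        apply hvN
        refine ⟨v - Pi.single i 1, ?_, by ring⟩
        rw [Tcube_eq] at hvT ⊢
        intro j
        have h1 := hvT j
        have h2 := hvT i
        simp only [Pi.sub_apply, Pi.single_apply]
        by_cases hj : j = i
        · subst hj; simp; omega
        · simp [hj]; omega
      have h2 := slice_ncard n k i 0 le_rfl hMpos
      calc 2 ^ (k + 1) *
            (Tcube n k \ ((fun v => Pi.single i 1 + v) '' Tcube n k)).ncard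
          ≤ 2 ^ (k + 1) * ({v ∈ Tcube n k | v i = 0}).ncard := by
            apply Nat.mul_le_mul_left
            exact Set.ncard_le_ncard hsub
              ((Tcube_finite n k).subset (Set.sep_subset _ _))
        _ = (Tcube n k).ncard := h2
    · -- s = -Pi.single i 1 ; boundary has v i = 2^(k+1) - 1
      subst hs
      have hsub : Tcube n k \ ((fun v => -Pi.single i 1 + v) '' Tcube n k) ⊆
          {v ∈ Tcube n k | v i = 2 ^ (k + 1) - 1} := by
        rintro v ⟨hvT, hvN⟩
        refine ⟨hvT, ?_⟩
        by_contra hvi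
        apply hvN
        refine ⟨v + Pi.single i 1, ?_, by ring⟩
        rw [Tcube_eq] at hvT ⊢
        intro j
        have h1 := hvT j
        have h2 := hvT i
        simp only [Pi.add_apply, Pi.single_apply]
        by_cases hj : j = i
        · subst hj; simp; omega
        · simp [hj]; omega
      have h2 := slice_ncard n k i (2 ^ (k + 1) - 1) (by omega) (by omega)
      calc 2 ^ (k + 1) *
            (Tcube n k \ ((fun v => -Pi.single i 1 + v) '' Tcube n k)).ncard
          ≤ 2 ^ (k + 1) * ({v ∈ Tcube n k | v i = 2 ^ (k + 1) - 1}).ncard := by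
            apply Nat.mul_le_mul_left
            exact Set.ncard_le_ncard hsub
              ((Tcube_finite n k).subset (Set.sep_subset _ _))
        _ = (Tcube n k).ncard := h2
end

section
/- Let a ≥ 0 and b ≥ 1. There is an integer n₀ = n₀(b) ≥ 2 such that for all n ≥ n₀ and all δ ≥ 1, if X is a δ-hyperbolic geodesic space and there is a map φ : Cₙ → X with a·d_{Cₙ}(x,y) ≤ d(φ(x),φ(y)) ≤ b·d_{Cₙ}(x,y) for all x,y ∈ Cₙ, then a < 12δ·(log n)/n. -/
/-- `g` is a geodesic parametrization of a geodesic segment from `x` to `y`. -/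
def IsGeodesicFrom {X : Type*} [MetricSpace X] (g : ℝ → X) (x y : X) : Prop :=
  g 0 = x ∧ g (dist x y) = y ∧
    ∀ s ∈ Set.Icc (0 : ℝ) (dist x y), ∀ t ∈ Set.Icc (0 : ℝ) (dist x y),
      dist (g s) (g t) = |s - t|

/-- `X` is a geodesic metric space. -/
def GeodesicSpace (X : Type*) [MetricSpace X] : Prop :=
  ∀ x y : X, ∃ g : ℝ → X, IsGeodesicFrom g x y

/-- Rips condition: every side of every geodesic triangle lies in the `δ`-neighbourhood
of the union of the other two sides. -/
def RipsHyperbolic (X : Type*) [MetricSpace X] (δ : ℝ) : Prop :=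
  ∀ x y z : X, ∀ gxy gxz gyz : ℝ → X,
    IsGeodesicFrom gxy x y → IsGeodesicFrom gxz x z → IsGeodesicFrom gyz y z →
    ∀ p ∈ gxy '' Set.Icc (0 : ℝ) (dist x y),
      Metric.infDist p
        (gxz '' Set.Icc (0 : ℝ) (dist x z) ∪ gyz '' Set.Icc (0 : ℝ) (dist y z)) ≤ δ

/-- The graph metric on the cycle `C_m = Cayley(ℤ/mℤ, {±1})`. -/
noncomputable def cycleDist {m : ℕ} (x y : ZMod m) : ℕ :=
  sInf {k : ℕ | (k : ZMod m) = y - x ∨ (k : ZMod m) = x - y}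

/-!
Along the cycle, `φ` is a chain of points with steps at most `b`. Bisecting such a chain and
applying the Rips condition to each halving shows that a geodesic between two chain points stays
within `δ log₂ n + b / 2` of the chain. Cut the image of the cycle into four quarter arcs
`A B`, `B C`, `C D`, `D A`; some point of the diagonal `[A, C]` is `δ`-close to `[A, B]`, to
`[B, C]` and to one of `[C, D]`, `[D, A]`, so two points of opposite arcs, at cycle distance at
least `n / 4`, have images at distance `O(δ log n + b)`. The lower bound `a · n / 4` on that
distance forces `a < 12 δ log n / n` once `log n` is large compared with `b`.
-/

open Set Metric

theorem IsGeodesicFrom.continuousOn {X : Type*} [MetricSpace X] {g : ℝ → X} {x y : X}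
    (hg : IsGeodesicFrom g x y) :
    ContinuousOn g (Icc 0 (dist x y)) :=
  (LipschitzOnWith.of_dist_le_mul (K := 1) fun s hs t ht => by
    simp [hg.2.2 s hs t ht, Real.dist_eq]).continuousOn

def IsGeodesicSegment {X : Type*} [MetricSpace X] (S : Set X) (x y : X) : Prop :=
  ∃ g : ℝ → X, IsGeodesicFrom g x y ∧ g '' Icc 0 (dist x y) = S

theorem GeodesicSpace.exists_isGeodesicSegment {X : Type*} [MetricSpace X]
    (hX : GeodesicSpace X) (x y : X) : ∃ S, IsGeodesicSegment S x y :=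
  let ⟨g, hg⟩ := hX x y
  ⟨_, g, hg, rfl⟩

namespace IsGeodesicSegment

variable {X : Type*} [MetricSpace X] {S : Set X} {x y p : X}

theorem symm (hS : IsGeodesicSegment S x y) : IsGeodesicSegment S y x := by
  obtain ⟨g, ⟨hg0, hgD, hg⟩, rfl⟩ := hS
  refine ⟨fun t => g (dist x y - t), ⟨?_, ?_, fun s hs t ht => ?_⟩, ?_⟩
  · simpa using hgD
  · simpa [dist_comm] using hg0
  · rw [dist_comm y x] at hs ht
    rw [hg _ ⟨by linarith [hs.2], by linarith [hs.1]⟩ _ ⟨by linarith [ht.2], by linarith [ht.1]⟩,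
      abs_sub_comm]
    ring_nf
  · rw [dist_comm y x, ← image_image g (fun t => dist x y - t), image_const_sub_Icc]
    simp

theorem left_mem (hS : IsGeodesicSegment S x y) : x ∈ S := by
  obtain ⟨g, hg, rfl⟩ := hS
  exact ⟨0, ⟨le_rfl, dist_nonneg⟩, hg.1⟩

theorem right_mem (hS : IsGeodesicSegment S x y) : y ∈ S :=
  hS.symm.left_mem

theorem isCompact (hS : IsGeodesicSegment S x y) : IsCompact S := by
  obtain ⟨g, hg, rfl⟩ := hS
  exact isCompact_Icc.image_of_continuousOn hg.continuousOn

theorem isPreconnected (hS : IsGeodesicSegment S x y) : IsPreconnected S := by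
  obtain ⟨g, hg, rfl⟩ := hS
  exact isPreconnected_Icc.image g hg.continuousOn

theorem dist_add_dist (hS : IsGeodesicSegment S x y) (hp : p ∈ S) :
    dist x p + dist p y = dist x y := by
  obtain ⟨g, ⟨hg0, hgD, hg⟩, rfl⟩ := hS
  obtain ⟨s, hs, rfl⟩ := hp
  have hD : dist x y ∈ Icc 0 (dist x y) := ⟨dist_nonneg, le_rfl⟩
  have h0 : (0 : ℝ) ∈ Icc 0 (dist x y) := ⟨le_rfl, dist_nonneg⟩
  have h1 := hg 0 h0 s hs
  have h2 := hg s hs _ hD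
  rw [hg0] at h1
  rw [hgD] at h2
  rw [h1, h2, abs_sub_comm, sub_zero, abs_of_nonneg hs.1, abs_of_nonpos (by linarith [hs.2])]
  ring

end IsGeodesicSegment

namespace RipsHyperbolic

variable {X : Type*} [MetricSpace X] {δ : ℝ}

theorem exists_dist_le (hR : RipsHyperbolic X δ) {x y z p : X} {Sxy Sxz Szy : Set X}
    (hxy : IsGeodesicSegment Sxy x y) (hxz : IsGeodesicSegment Sxz x z)
    (hzy : IsGeodesicSegment Szy z y) (hp : p ∈ Sxy) :
    ∃ q ∈ Sxz ∪ Szy, dist p q ≤ δ := by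
  obtain ⟨gxy, hgxy, rfl⟩ := hxy
  obtain ⟨gxz, hgxz, hSxz⟩ := id hxz
  obtain ⟨gyz, hgyz, hSyz⟩ := hzy.symm
  obtain ⟨q, hq, hpq⟩ := (hxz.isCompact.union hzy.isCompact).exists_infDist_eq_dist
    ⟨x, Or.inl hxz.left_mem⟩ p
  refine ⟨q, hq, hpq ▸ ?_⟩
  simpa only [hSxz, hSyz] using hR x y z gxy gxz gyz hgxy hgxz hgyz p hp

/-- The Rips condition covers `[x, z]` by two closed sets, one containing `x` and the other `z`;
as `[x, z]` is connected, they meet. -/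
theorem exists_dist_le_and_dist_le (hR : RipsHyperbolic X δ) (hδ : 0 ≤ δ) {x y z : X}
    {Sxy Syz Sxz : Set X} (hxy : IsGeodesicSegment Sxy x y) (hyz : IsGeodesicSegment Syz y z)
    (hxz : IsGeodesicSegment Sxz x z) :
    ∃ p ∈ Sxz, (∃ q ∈ Sxy, dist p q ≤ δ) ∧ ∃ q ∈ Syz, dist p q ≤ δ := by
  have hclosed (S : Set X) : IsClosed {p | infDist p S ≤ δ} :=
    isClosed_le (continuous_infDist_pt S) continuous_const
  have hnear {S : Set X} {q : X} (hq : q ∈ S) : infDist q S ≤ δ := by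
    rwa [infDist_zero_of_mem hq]
  have hcover : Sxz ⊆ {p | infDist p Sxy ≤ δ} ∪ {p | infDist p Syz ≤ δ} := fun p hp => by
    obtain ⟨q, hq | hq, hpq⟩ := hR.exists_dist_le hxz hxy hyz hp
    · exact Or.inl ((infDist_le_dist_of_mem hq).trans hpq)
    · exact Or.inr ((infDist_le_dist_of_mem hq).trans hpq)
  obtain ⟨p, hp, hpxy, hpyz⟩ := isPreconnected_closed_iff.1 hxz.isPreconnected _ _
    (hclosed Sxy) (hclosed Syz) hcover ⟨x, hxz.left_mem, hnear hxy.left_mem⟩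
    ⟨z, hxz.right_mem, hnear hyz.right_mem⟩
  obtain ⟨q, hq, hpq⟩ := hxy.isCompact.exists_infDist_eq_dist ⟨x, hxy.left_mem⟩ p
  obtain ⟨q', hq', hpq'⟩ := hyz.isCompact.exists_infDist_eq_dist ⟨y, hyz.left_mem⟩ p
  exact ⟨p, hp, ⟨q, hq, hpq ▸ hpxy⟩, q', hq', hpq' ▸ hpyz⟩

theorem exists_dist_chain_le (hX : GeodesicSpace X) (hR : RipsHyperbolic X δ) {b : ℝ}
    {c : ℕ → X} (hc : ∀ l, dist (c l) (c (l + 1)) ≤ b) (k : ℕ) {i j : ℕ} (hij : i ≤ j)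
    (hk : j - i ≤ 2 ^ k) {S : Set X} (hS : IsGeodesicSegment S (c i) (c j)) {p : X}
    (hp : p ∈ S) : ∃ l ∈ Icc i j, dist p (c l) ≤ δ * k + b / 2 := by
  induction k generalizing i j S p with
  | zero =>
    have hend : dist (c i) (c j) ≤ b := by
      rcases (by omega : j = i ∨ j = i + 1) with rfl | rfl
      · simpa using dist_nonneg.trans (hc 0)
      · exact hc i
    have hsum := hS.dist_add_dist hp
    rw [dist_comm] at hsum
    rcases le_total (dist p (c i)) (dist p (c j)) with h | h
    · exact ⟨i, ⟨le_rfl, hij⟩, by push_cast; linarith⟩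
    · exact ⟨j, ⟨hij, le_rfl⟩, by push_cast; linarith⟩
  | succ k ih =>
    rw [pow_succ] at hk
    obtain ⟨S₁, hS₁⟩ := hX.exists_isGeodesicSegment (c i) (c ((i + j) / 2))
    obtain ⟨S₂, hS₂⟩ := hX.exists_isGeodesicSegment (c ((i + j) / 2)) (c j)
    obtain ⟨q, hq | hq, hpq⟩ := hR.exists_dist_le hS hS₁ hS₂ hp
    · obtain ⟨l, hl, hql⟩ := ih (by omega) (by omega) hS₁ hq
      exact ⟨l, ⟨hl.1, hl.2.trans (by omega)⟩, by push_cast; linarith [dist_triangle p q (c l)]⟩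
    · obtain ⟨l, hl, hql⟩ := ih (by omega) (by omega) hS₂ hq
      exact ⟨l, ⟨(by omega : i ≤ _).trans hl.1, hl.2⟩,
        by push_cast; linarith [dist_triangle p q (c l)]⟩

theorem exists_far_pair_dist_le (hX : GeodesicSpace X) (hR : RipsHyperbolic X δ) (hδ : 0 ≤ δ)
    {b : ℝ} {c : ℕ → X} (hc : ∀ l, dist (c l) (c (l + 1)) ≤ b) {n m k : ℕ} (hcn : c n = c 0)
    (hmn : 4 * m ≤ n) (hnk : n ≤ 2 ^ k) :
    ∃ i j, i ≤ j ∧ m ≤ j - i ∧ j - i ≤ n - m ∧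
      dist (c i) (c j) ≤ 2 * (δ * k + b / 2) + 2 * δ := by
  have shadow {i j : ℕ} (hij : i ≤ j) (hjn : j ≤ n) {S : Set X}
      (hS : IsGeodesicSegment S (c i) (c j)) {p : X} (hp : p ∈ S) :
      ∃ l ∈ Icc i j, dist p (c l) ≤ δ * k + b / 2 :=
    hR.exists_dist_chain_le hX hc k hij (by omega) hS hp
  have pair {i j : ℕ} {u z w : X} (hui : dist u (c i) ≤ δ * k + b / 2) (hzu : dist z u ≤ δ)
      (hzw : dist z w ≤ δ) (hwj : dist w (c j) ≤ δ * k + b / 2) :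
      dist (c i) (c j) ≤ 2 * (δ * k + b / 2) + 2 * δ := by
    linarith [dist_triangle4 (c i) u z w, dist_triangle (c i) w (c j), dist_comm u (c i),
      dist_comm z u]
  obtain ⟨SAB, hAB⟩ := hX.exists_isGeodesicSegment (c 0) (c m)
  obtain ⟨SBC, hBC⟩ := hX.exists_isGeodesicSegment (c m) (c (2 * m))
  obtain ⟨SCD, hCD⟩ := hX.exists_isGeodesicSegment (c (2 * m)) (c (3 * m))
  obtain ⟨SDA, hDA⟩ := hX.exists_isGeodesicSegment (c (3 * m)) (c n)
  obtain ⟨SAC, hAC⟩ := hX.exists_isGeodesicSegment (c 0) (c (2 * m))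
  obtain ⟨z, hz, ⟨u, hu, hzu⟩, v, hv, hzv⟩ := hR.exists_dist_le_and_dist_le hδ hAB hBC hAC
  obtain ⟨w, hw | hw, hzw⟩ := hR.exists_dist_le hAC.symm hCD (hcn ▸ hDA) hz
  · obtain ⟨i, hi, hui⟩ := shadow (by omega) (by omega) hAB hu
    obtain ⟨j, hj, hwj⟩ := shadow (by omega) (by omega) hCD hw
    exact ⟨i, j, by grind, by grind, by grind, pair hui hzu hzw hwj⟩
  · obtain ⟨i, hi, hvi⟩ := shadow (by omega) (by omega) hBC hv
    obtain ⟨j, hj, hwj⟩ := shadow (by omega) (by omega) hDA hw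
    exact ⟨i, j, by grind, by grind, by grind, pair hvi hzv hzw hwj⟩

end RipsHyperbolic

theorem cycleDist_le {n : ℕ} {x y : ZMod n} {k : ℕ} (h : (k : ZMod n) = y - x) :
    cycleDist x y ≤ k :=
  Nat.sInf_le (Or.inl h)

theorem min_val_le_cycleDist {n : ℕ} [NeZero n] (x y : ZMod n) :
    min (y - x).val (x - y).val ≤ cycleDist x y := by
  have hne : {k : ℕ | (k : ZMod n) = y - x ∨ (k : ZMod n) = x - y}.Nonempty :=
    ⟨(y - x).val, Or.inl (ZMod.natCast_zmod_val _)⟩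
  rcases Nat.sInf_mem hne with h | h
  · exact min_le_of_left_le (by rw [← h, ZMod.val_natCast]; exact Nat.mod_le _ _)
  · exact min_le_of_right_le (by rw [← h, ZMod.val_natCast]; exact Nat.mod_le _ _)

theorem min_le_cycleDist_natCast {n i j : ℕ} (hij : i ≤ j) (hjin : j - i < n) :
    min (j - i) (n - (j - i)) ≤ cycleDist (i : ZMod n) (j : ZMod n) := by
  have : NeZero n := ⟨by omega⟩
  have hval : ((j : ZMod n) - i).val = j - i := by
    rw [← Nat.cast_sub hij, ZMod.val_natCast, Nat.mod_eq_of_lt hjin]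
  rcases Nat.eq_zero_or_pos (j - i) with h0 | h0
  · simp [h0]
  have hval' : ((i : ZMod n) - j).val = n - (j - i) := by
    rw [← neg_sub, ZMod.neg_val, if_neg (fun h => by simp [h] at hval; omega), hval]
  simpa only [hval, hval'] using min_val_le_cycleDist (i : ZMod n) j

open Real in
theorem lt_twelve_mul_log_div {a b δ : ℝ} {n m : ℕ} (ha : 0 ≤ a) (hb : 1 ≤ b) (hδ : 1 ≤ δ)
    (hab : a ≤ b) (hn : exp (18 * b + 40) ≤ n) (hm : n ≤ 4 * m + 3)
    (h : a * m ≤ 2 * (δ * Nat.clog 2 n + b / 2) + 2 * δ) :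
    a < 12 * δ * (log n / n) := by
  have hn0 : 0 < (n : ℝ) := (exp_pos _).trans_le hn
  have hL : 18 * b + 40 ≤ log n := (le_log_iff_exp_le hn0).2 hn
  have hclog : (Nat.clog 2 n : ℝ) < 1.45 * log n + 1 := by
    have h1 : (Nat.clog 2 n : ℝ) < logb 2 n + 1 := by
      rw [← natCeil_logb_natCast, Nat.cast_ofNat]
      exact Nat.ceil_lt_add_one (logb_nonneg one_lt_two (by exact_mod_cast hn0))
    have h2 : logb 2 n ≤ 1.45 * log n := by
      rw [logb, div_le_iff₀ (log_pos one_lt_two)]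
      nlinarith [log_two_gt_d9]
    linarith
  have hm' : (n : ℝ) ≤ 4 * m + 3 := by exact_mod_cast hm
  rw [← mul_div_assoc, lt_div_iff₀ hn0]
  nlinarith [mul_le_mul_of_nonneg_left hm' ha, mul_lt_mul_of_pos_left hclog (by linarith : 0 < δ),
    mul_le_mul_of_nonneg_left hL (by linarith : 0 ≤ δ), mul_nonneg (by linarith : 0 ≤ δ - 1)
      (by linarith : 0 ≤ b)]

/-- Let `a ≥ 0`, `b ≥ 1`.  There is `n₀ = n₀(b) ≥ 2` such that for all `n ≥ n₀` and all
`δ ≥ 1`: if `X` is a `δ`-hyperbolic geodesic space and `φ : Cₙ → X` satisfies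
`a·d(x,y) ≤ d(φx,φy) ≤ b·d(x,y)` for all `x,y ∈ Cₙ`, then `a < 12δ·(log n)/n`. -/
theorem cycle_embedding_bound_uniform (a b : ℝ) (ha : 0 ≤ a) (hb : 1 ≤ b) :
    ∃ n₀ : ℕ, 2 ≤ n₀ ∧ ∀ n : ℕ, n₀ ≤ n → ∀ δ : ℝ, 1 ≤ δ →
      ∀ (X : Type u) (_ : MetricSpace X), GeodesicSpace X → RipsHyperbolic X δ →
      ∀ φ : ZMod n → X,
        (∀ x y : ZMod n,
          a * (cycleDist x y : ℝ) ≤ dist (φ x) (φ y) ∧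
          dist (φ x) (φ y) ≤ b * (cycleDist x y : ℝ)) →
        a < 12 * δ * (Real.log n / n) := by
  refine ⟨⌈Real.exp (18 * b + 40)⌉₊, ?_, fun n hn δ hδ X _ hX hR φ hφ => ?_⟩
  · exact Nat.lt_ceil.2 (by push_cast; linarith [Real.add_one_le_exp (18 * b + 40)])
  have hexp : Real.exp (18 * b + 40) ≤ n := (Nat.le_ceil _).trans (by exact_mod_cast hn)
  have hn4 : 4 ≤ n := by
    exact_mod_cast (by linarith [Real.add_one_le_exp (18 * b + 40)] : (4 : ℝ) ≤ n)
  set c : ℕ → X := fun l => φ l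
  have hc (l : ℕ) : dist (c l) (c (l + 1)) ≤ b := by
    have hstep : cycleDist (l : ZMod n) ((l + 1 : ℕ) : ZMod n) ≤ 1 :=
      cycleDist_le (by push_cast; ring)
    calc dist (c l) (c (l + 1))
        ≤ b * cycleDist (l : ZMod n) ((l + 1 : ℕ) : ZMod n) := (hφ _ _).2
      _ ≤ b * 1 := mul_le_mul_of_nonneg_left (by exact_mod_cast hstep) (by linarith)
      _ = b := mul_one b
  have hcn : c n = c 0 := by simp [c]
  obtain ⟨i, j, hij, hmji, hjim, hdist⟩ := hR.exists_far_pair_dist_le hX (by linarith) hc hcn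
    (m := n / 4) (by omega) (Nat.le_pow_clog one_lt_two n)
  have hm : ((n / 4 : ℕ) : ℝ) ≤ cycleDist (i : ZMod n) (j : ZMod n) := by
    exact_mod_cast (le_min hmji (by omega)).trans (min_le_cycleDist_natCast hij (by omega))
  have hpos : (0 : ℝ) < cycleDist (i : ZMod n) (j : ZMod n) :=
    lt_of_lt_of_le (by exact_mod_cast (by omega : 0 < n / 4)) hm
  obtain ⟨hlow, hup⟩ := hφ i j
  exact lt_twelve_mul_log_div ha hb hδ (le_of_mul_le_mul_right (hlow.trans hup) hpos) hexp
    (by omega) ((mul_le_mul_of_nonneg_left hm ha).trans (hlow.trans hdist))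
end

section
/- Let n ≥ 4, D ≥ 1, and let (X,d) be a geodesic metric space containing a geodesic n-gon [a₁,...,aₙ] such that the distance between points on non-adjacent sides is at least D. Let R ≥ D be the length of the longest side. Then there is a cycle C of length at least Dn/2 and a 1-Lipschitz embedding φ : (C, d_C) → (X,d) which contracts distances by at most a factor 3nR/D, i.e. d_C(x,y) ≤ (3nR/D)·d(φ(x),φ(y)) for all x,y ∈ C. -/
namespace PGEC

open Set Finset

/-! ### generic helpers -/

theorem geo_dist {X : Type*} [MetricSpace X] {g : ℝ → X} {x y : X}
    (h : IsGeodesicFrom g x y) {s t : ℝ}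
    (hs : s ∈ Set.Icc (0 : ℝ) (dist x y)) (ht : t ∈ Set.Icc (0 : ℝ) (dist x y)) :
    dist (g s) (g t) = |s - t| := h.2.2 s hs t ht

theorem zmod_cast_ne_zero {n : ℕ} (hn : 4 ≤ n) {k : ℕ} (h0 : 0 < k) (h3 : k < n) :
    (k : ZMod n) ≠ 0 := by
  haveI : NeZero n := ⟨by omega⟩
  rw [Ne, ZMod.natCast_eq_zero_iff]
  intro hdvd; have := Nat.le_of_dvd h0 hdvd; omega

theorem zmod_one_ne {n : ℕ} (hn : 4 ≤ n) : (1 : ZMod n) ≠ 0 := by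
  have := zmod_cast_ne_zero hn (k := 1) one_pos (by omega); simpa using this

theorem zmod_two_ne {n : ℕ} (hn : 4 ≤ n) : (2 : ZMod n) ≠ 0 := by
  have := zmod_cast_ne_zero hn (k := 2) (by omega) (by omega); simpa using this

theorem zmod_three_ne {n : ℕ} (hn : 4 ≤ n) : (3 : ZMod n) ≠ 0 := by
  have := zmod_cast_ne_zero hn (k := 3) (by omega) (by omega); simpa using this

/-- the three non-adjacency conditions for `hsep (i-1) (i+1)`. -/
theorem nonadjA {n : ℕ} (hn : 4 ≤ n) (i : ZMod n) :
    (i + 1) ≠ (i - 1) - 1 ∧ (i + 1) ≠ (i - 1) ∧ (i + 1) ≠ (i - 1) + 1 := by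
  refine ⟨fun h => zmod_three_ne hn ?_, fun h => zmod_two_ne hn ?_, fun h => zmod_one_ne hn ?_⟩
  · linear_combination h
  · linear_combination h
  · linear_combination h

/-- the three non-adjacency conditions for `hsep i (i+2)`. -/
theorem nonadjB {n : ℕ} (hn : 4 ≤ n) (i : ZMod n) :
    (i + 2) ≠ i - 1 ∧ (i + 2) ≠ i ∧ (i + 2) ≠ i + 1 := by
  refine ⟨fun h => zmod_three_ne hn ?_, fun h => zmod_two_ne hn ?_, fun h => zmod_one_ne hn ?_⟩
  · linear_combination h
  · linear_combination h
  · linear_combination h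

/-- generic non-adjacency from a cyclic gap in `[2, n-2]`. -/
theorem nonadjC {n : ℕ} (hn : 4 ≤ n) {j j' : ℕ} (hle : j ≤ j')
    (h2 : 2 ≤ j' - j) (hub : j' - j ≤ n - 2) :
    ((j' : ZMod n) ≠ (j : ZMod n) - 1) ∧ ((j' : ZMod n) ≠ (j : ZMod n)) ∧
      ((j' : ZMod n) ≠ (j : ZMod n) + 1) := by
  haveI : NeZero n := ⟨by omega⟩
  set e : ℕ := j' - j with he
  have hj' : (j' : ZMod n) = (j : ZMod n) + (e : ZMod n) := by
    have : j' = j + e := by omega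
    rw [this]; push_cast; ring
  have he0 : (e : ZMod n) ≠ 0 := zmod_cast_ne_zero hn (by omega) (by omega)
  have he1 : (e : ZMod n) ≠ 1 := by
    intro h
    have h' : ((e - 1 : ℕ) : ZMod n) = 0 := by
      push_cast [Nat.cast_sub (by omega : 1 ≤ e)]
      rw [h]; ring
    rw [ZMod.natCast_eq_zero_iff] at h'
    have := Nat.le_of_dvd (by omega) h'; omega
  have hem : (e : ZMod n) ≠ -1 := by
    intro h
    have h' : ((e + 1 : ℕ) : ZMod n) = 0 := by
      push_cast; rw [h]; ring
    rw [ZMod.natCast_eq_zero_iff] at h'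
    have := Nat.le_of_dvd (by omega) h'; omega
  refine ⟨fun h => hem ?_, fun h => he0 ?_, fun h => he1 ?_⟩
  · rw [hj'] at h; linear_combination h
  · rw [hj'] at h; linear_combination h
  · rw [hj'] at h; linear_combination h

structure Cfg (X : Type*) [MetricSpace X] where
  n : ℕ
  D : ℝ
  R : ℝ
  a : ZMod n → X
  g : ZMod n → ℝ → X
  st : ZMod n → ℝ × ℝ
  ch : ZMod n → ℝ → X
  hn : 4 ≤ n
  hD : 1 ≤ D
  hRD : D ≤ R
  hg : ∀ i, IsGeodesicFrom (g i) (a i) (a (i + 1))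
  hside : ∀ i, dist (a i) (a (i + 1)) ≤ R
  hsep : ∀ i j, j ≠ i - 1 → j ≠ i → j ≠ i + 1 →
      ∀ p ∈ g i '' Set.Icc (0 : ℝ) (dist (a i) (a (i + 1))),
      ∀ q ∈ g j '' Set.Icc (0 : ℝ) (dist (a j) (a (j + 1))), D ≤ dist p q
  hst1 : ∀ i, (st i).1 ∈ Set.Icc (0 : ℝ) (dist (a i) (a (i + 1)))
  hst2 : ∀ i, (st i).2 ∈ Set.Icc (0 : ℝ) (dist (a (i + 1)) (a (i + 1 + 1)))
  hC3 : ∀ i, dist (g i (st i).1) (g (i + 1) (st i).2) ≤ D / 3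
  hC4 : ∀ i, (st (i - 1)).2 ≤ (st i).1
  hch : ∀ i, IsGeodesicFrom (ch i) (g i (st i).1) (g (i + 1) (st i).2)
  hopt : ∀ st' : ZMod n → ℝ × ℝ,
      (∀ i, (st' i).1 ∈ Set.Icc (0 : ℝ) (dist (a i) (a (i + 1))) ∧
            (st' i).2 ∈ Set.Icc (0 : ℝ) (dist (a (i + 1)) (a (i + 1 + 1))) ∧
            dist (g i (st' i).1) (g (i + 1) (st' i).2) ≤ D / 3 ∧
            (st' (i - 1)).2 ≤ (st' i).1) →
      (∑ j ∈ Finset.range n, ((st' (j : ZMod n)).2 - (st' (j : ZMod n)).1)) ≤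
      (∑ j ∈ Finset.range n, ((st (j : ZMod n)).2 - (st (j : ZMod n)).1))

variable {X : Type*} [MetricSpace X]

theorem Cfg.nz (c : Cfg X) : NeZero c.n := ⟨by have := c.hn; omega⟩

/-- length of side `i` -/
noncomputable def Cfg.SL (c : Cfg X) (i : ZMod c.n) : ℝ := dist (c.a i) (c.a (i + 1))

/-- the `τ` parameter cutting the beginning of side `j` -/
noncomputable def Cfg.tb (c : Cfg X) (j : ZMod c.n) : ℝ := (c.st (j - 1)).2

/-- length of the retained middle part of side `j` -/
noncomputable def Cfg.mid (c : Cfg X) (j : ZMod c.n) : ℝ := (c.st j).1 - c.tb j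

/-- start point of the chord at the corner after side `j` -/
noncomputable def Cfg.pP (c : Cfg X) (j : ZMod c.n) : X := c.g j (c.st j).1

/-- end point of the chord at the corner after side `j` -/
noncomputable def Cfg.qP (c : Cfg X) (j : ZMod c.n) : X := c.g (j + 1) (c.st j).2

/-- chord length -/
noncomputable def Cfg.cL (c : Cfg X) (j : ZMod c.n) : ℝ := dist (c.pP j) (c.qP j)

/-- block length: middle of side `j` plus following chord -/
noncomputable def Cfg.bL (c : Cfg X) (j : ZMod c.n) : ℝ := c.mid j + c.cL j

/-- point at arc-parameter `α` in block `j` -/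
noncomputable def Cfg.BPt (c : Cfg X) (j : ZMod c.n) (α : ℝ) : X :=
  if α ≤ c.mid j then c.g j (c.tb j + α) else c.ch j (α - c.mid j)

/-- cumulative block length -/
noncomputable def Cfg.cum (c : Cfg X) (k : ℕ) : ℝ := ∑ j ∈ Finset.range k, c.bL (j : ZMod c.n)

/-- total loop length -/
noncomputable def Cfg.LP (c : Cfg X) : ℝ := c.cum c.n

open Classical in
/-- block index of arc parameter `θ` -/
noncomputable def Cfg.J (c : Cfg X) (θ : ℝ) : ℕ :=
  Nat.findGreatest (fun k => c.cum k ≤ θ) (c.n - 1)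

/-- the loop -/
noncomputable def Cfg.γ (c : Cfg X) (θ : ℝ) : X :=
  c.BPt (c.J θ : ZMod c.n) (θ - c.cum (c.J θ))



/-! ### basic facts -/

variable (c : Cfg X)

theorem Cfg.SL0 (i : ZMod c.n) : 0 ≤ c.SL i := dist_nonneg

theorem Cfg.SLR (i : ZMod c.n) : c.SL i ≤ c.R := c.hside i

theorem Cfg.side_dist {j : ZMod c.n} {s t : ℝ}
    (hs : s ∈ Set.Icc (0 : ℝ) (c.SL j)) (ht : t ∈ Set.Icc (0 : ℝ) (c.SL j)) :
    dist (c.g j s) (c.g j t) = |s - t| := geo_dist (c.hg j) hs ht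

theorem Cfg.side_mem {j : ZMod c.n} {s : ℝ} (hs : s ∈ Set.Icc (0 : ℝ) (c.SL j)) :
    c.g j s ∈ c.g j '' Set.Icc (0 : ℝ) (dist (c.a j) (c.a (j + 1))) :=
  Set.mem_image_of_mem _ hs

/-- separation of points on non-adjacent sides. -/
theorem Cfg.sepD {i j : ZMod c.n} (h1 : j ≠ i - 1) (h2 : j ≠ i) (h3 : j ≠ i + 1)
    {wi wj : ℝ} (hwi : wi ∈ Set.Icc (0 : ℝ) (c.SL i)) (hwj : wj ∈ Set.Icc (0 : ℝ) (c.SL j)) :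
    c.D ≤ dist (c.g i wi) (c.g j wj) :=
  c.hsep i j h1 h2 h3 _ (c.side_mem hwi) _ (c.side_mem hwj)

theorem Cfg.sub_add (j : ZMod c.n) : j - 1 + 1 = j := by ring

theorem Cfg.SLD (i : ZMod c.n) : c.D ≤ c.SL i := by
  have h := nonadjA c.hn i
  have e1 : c.g (i - 1) (c.SL (i - 1)) = c.a i := by
    calc c.g (i - 1) (c.SL (i - 1)) = c.a (i - 1 + 1) := (c.hg (i - 1)).2.1
      _ = c.a i := by rw [c.sub_add]
  have e2 : c.g (i + 1) 0 = c.a (i + 1) := (c.hg (i + 1)).1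
  have := c.sepD h.1 h.2.1 h.2.2 (i := i - 1) (j := i + 1)
    (wi := c.SL (i - 1)) (wj := 0)
    ⟨c.SL0 _, le_refl _⟩ ⟨le_refl _, c.SL0 _⟩
  rw [e1, e2] at this
  exact this

theorem Cfg.Dpos : 0 < c.D := lt_of_lt_of_le one_pos c.hD

theorem Cfg.tb_mem (j : ZMod c.n) : c.tb j ∈ Set.Icc (0 : ℝ) (c.SL j) := by
  have := c.hst2 (j - 1)
  rw [show j - 1 + 1 = j from c.sub_add j] at this
  exact this

theorem Cfg.st1_mem (j : ZMod c.n) : (c.st j).1 ∈ Set.Icc (0 : ℝ) (c.SL j) := c.hst1 j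

theorem Cfg.st2_mem (j : ZMod c.n) : (c.st j).2 ∈ Set.Icc (0 : ℝ) (c.SL (j + 1)) := c.hst2 j

theorem Cfg.mid_nonneg (j : ZMod c.n) : 0 ≤ c.mid j := by
  have := c.hC4 j
  unfold Cfg.mid Cfg.tb
  linarith

theorem Cfg.midparam {j : ZMod c.n} {α : ℝ} (h0 : 0 ≤ α) (h1 : α ≤ c.mid j) :
    c.tb j + α ∈ Set.Icc (0 : ℝ) (c.SL j) := by
  have ht := c.tb_mem j
  have hs := c.st1_mem j
  unfold Cfg.mid at h1
  constructor
  · have := ht.1; linarith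
  · have := hs.2; linarith

theorem Cfg.cL_le (j : ZMod c.n) : c.cL j ≤ c.D / 3 := c.hC3 j

theorem Cfg.cL0 (j : ZMod c.n) : 0 ≤ c.cL j := dist_nonneg

theorem Cfg.qP_prev (j : ZMod c.n) : c.qP (j - 1) = c.g j (c.tb j) := by
  unfold Cfg.qP Cfg.tb
  rw [show j - 1 + 1 = j from c.sub_add j]

/-- the middle of each side is long: at least `D` minus the two adjacent chords. -/
theorem Cfg.mid_ge (j : ZMod c.n) : c.D - c.cL (j - 1) - c.cL j ≤ c.mid j := by
  have h := nonadjA c.hn j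
  have hPQ : c.D ≤ dist (c.pP (j - 1)) (c.qP j) := by
    have := c.sepD h.1 h.2.1 h.2.2 (i := j - 1) (j := j + 1)
      (wi := (c.st (j - 1)).1) (wj := (c.st j).2)
      (c.st1_mem (j - 1)) (c.st2_mem j)
    exact this
  have hAB : dist (c.g j (c.tb j)) (c.g j (c.st j).1) = c.mid j := by
    rw [c.side_dist (c.tb_mem j) (c.st1_mem j)]
    unfold Cfg.mid
    rw [abs_sub_comm, abs_of_nonneg (by have := c.mid_nonneg j; unfold Cfg.mid at this; linarith)]
  have h1 : dist (c.pP (j - 1)) (c.g j (c.tb j)) = c.cL (j - 1) := by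
    unfold Cfg.cL; rw [c.qP_prev j]
  have tri : dist (c.pP (j - 1)) (c.qP j) ≤
      dist (c.pP (j - 1)) (c.g j (c.tb j)) + dist (c.g j (c.tb j)) (c.g j (c.st j).1)
        + dist (c.g j (c.st j).1) (c.qP j) := dist_triangle4 _ _ _ _
  have h2 : dist (c.g j (c.st j).1) (c.qP j) = c.cL j := rfl
  rw [h1, hAB, h2] at tri
  linarith

theorem Cfg.midD3 (j : ZMod c.n) : c.D / 3 ≤ c.mid j := by
  have := c.mid_ge j
  have := c.cL_le (j - 1)
  have := c.cL_le j
  linarith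

theorem Cfg.bL_pos (j : ZMod c.n) : 0 < c.bL j := by
  have := c.midD3 j
  have := c.cL0 j
  have := c.Dpos
  unfold Cfg.bL
  linarith

theorem Cfg.bL_le (j : ZMod c.n) : c.bL j ≤ c.R + c.D / 3 := by
  have h1 : c.mid j ≤ c.R := by
    have := (c.st1_mem j).2
    have := (c.tb_mem j).1
    have := c.SLR j
    unfold Cfg.mid; linarith
  have := c.cL_le j
  unfold Cfg.bL
  linarith

/-! ### chord facts -/

theorem Cfg.ch_zero (j : ZMod c.n) : c.ch j 0 = c.pP j := (c.hch j).1

theorem Cfg.ch_end (j : ZMod c.n) : c.ch j (c.cL j) = c.qP j := (c.hch j).2.1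

theorem Cfg.ch_dist {j : ZMod c.n} {s t : ℝ}
    (hs : s ∈ Set.Icc (0 : ℝ) (c.cL j)) (ht : t ∈ Set.Icc (0 : ℝ) (c.cL j)) :
    dist (c.ch j s) (c.ch j t) = |s - t| := geo_dist (c.hch j) hs ht

theorem Cfg.ch_dist_p {j : ZMod c.n} {s : ℝ} (hs : s ∈ Set.Icc (0 : ℝ) (c.cL j)) :
    dist (c.ch j s) (c.pP j) = s := by
  rw [← c.ch_zero j, c.ch_dist hs ⟨le_refl _, c.cL0 j⟩]
  rw [sub_zero, abs_of_nonneg hs.1]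

theorem Cfg.ch_dist_q {j : ZMod c.n} {s : ℝ} (hs : s ∈ Set.Icc (0 : ℝ) (c.cL j)) :
    dist (c.ch j s) (c.qP j) = c.cL j - s := by
  rw [← c.ch_end j, c.ch_dist hs ⟨c.cL0 j, le_refl _⟩]
  rw [abs_of_nonpos (by linarith [hs.2]), neg_sub]

/-! ### block point facts -/

theorem Cfg.BPt_mid {j : ZMod c.n} {α : ℝ} (h : α ≤ c.mid j) :
    c.BPt j α = c.g j (c.tb j + α) := if_pos h

theorem Cfg.BPt_chord {j : ZMod c.n} {α : ℝ} (h : ¬ α ≤ c.mid j) :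
    c.BPt j α = c.ch j (α - c.mid j) := if_neg h

theorem Cfg.BPt_zero (j : ZMod c.n) : c.BPt j 0 = c.g j (c.tb j) := by
  rw [c.BPt_mid (c.mid_nonneg j), add_zero]

theorem Cfg.BPt_start_next (j : ZMod c.n) : c.BPt (j + 1) 0 = c.qP j := by
  rw [c.BPt_zero (j + 1)]
  unfold Cfg.qP Cfg.tb
  rw [show j + 1 - 1 = j by ring]

theorem Cfg.pP_param (j : ZMod c.n) : c.pP j = c.g j (c.tb j + c.mid j) := by
  unfold Cfg.pP Cfg.mid; ring_nf

theorem Cfg.BPt_end (j : ZMod c.n) : c.BPt j (c.bL j) = c.qP j := by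
  rcases eq_or_lt_of_le (c.cL0 j) with hc | hc
  · have hb : c.bL j = c.mid j := by unfold Cfg.bL; rw [← hc]; ring
    rw [hb, c.BPt_mid (le_refl _), ← c.pP_param j]
    exact (dist_eq_zero.mp hc.symm)
  · have hb : ¬ c.bL j ≤ c.mid j := by unfold Cfg.bL; linarith
    rw [c.BPt_chord hb]
    unfold Cfg.bL
    rw [show c.mid j + c.cL j - c.mid j = c.cL j by ring, c.ch_end j]


/-! ### cumulative lengths and the loop -/

theorem Cfg.cum_zero : c.cum 0 = 0 := Finset.sum_range_zero _

theorem Cfg.cum_succ (k : ℕ) : c.cum (k + 1) = c.cum k + c.bL (k : ZMod c.n) :=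
  Finset.sum_range_succ _ _

theorem Cfg.cum_mono {k k' : ℕ} (h : k ≤ k') : c.cum k ≤ c.cum k' := by
  unfold Cfg.cum
  apply Finset.sum_le_sum_of_subset_of_nonneg
  · exact Finset.range_subset_range.mpr h
  · intro j _ _; exact le_of_lt (c.bL_pos _)

theorem Cfg.cum_strict {k k' : ℕ} (h : k < k') : c.cum k < c.cum k' := by
  have h1 : c.cum (k + 1) ≤ c.cum k' := c.cum_mono h
  have h2 := c.cum_succ k
  have := c.bL_pos (k : ZMod c.n)
  linarith

theorem Cfg.cum_nonneg (k : ℕ) : 0 ≤ c.cum k := by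
  have := c.cum_zero
  have := c.cum_mono (Nat.zero_le k)
  linarith

theorem Cfg.J_le (θ : ℝ) : c.J θ ≤ c.n - 1 := Nat.findGreatest_le _

theorem Cfg.J_cum_le {θ : ℝ} (hθ : 0 ≤ θ) : c.cum (c.J θ) ≤ θ := by
  exact Nat.findGreatest_spec (P := fun k => c.cum k ≤ θ) (Nat.zero_le _)
    (show c.cum 0 ≤ θ by rw [c.cum_zero]; exact hθ)

theorem Cfg.J_next {θ : ℝ} (hθL : θ ≤ c.LP) : θ ≤ c.cum (c.J θ + 1) := by
  by_cases h : c.J θ + 1 ≤ c.n - 1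
  · have hg := Nat.findGreatest_is_greatest (P := fun k => c.cum k ≤ θ)
      (Nat.lt_succ_self _) h
    unfold Cfg.J at h hg ⊢
    linarith [le_of_not_ge hg]
  · have hj := c.J_le θ
    have hn := c.hn
    have : c.J θ = c.n - 1 := by omega
    rw [this, show c.n - 1 + 1 = c.n by omega]
    exact le_trans hθL (le_refl _)

theorem Cfg.J_mono {θ θ' : ℝ} (h : θ ≤ θ') : c.J θ ≤ c.J θ' := by
  unfold Cfg.J
  exact Nat.findGreatest_mono (fun k hk => le_trans hk h) le_rfl

theorem Cfg.J_cum {k : ℕ} (hk : k ≤ c.n - 1) : c.J (c.cum k) = k := by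
  apply le_antisymm
  · by_contra hcon
    push_neg at hcon
    have h1 : c.cum (c.J (c.cum k)) ≤ c.cum k := c.J_cum_le (c.cum_nonneg k)
    have h2 : c.cum k < c.cum (c.J (c.cum k)) := c.cum_strict hcon
    linarith
  · unfold Cfg.J
    exact Nat.le_findGreatest hk (le_refl _)

theorem Cfg.γ_block {θ : ℝ} : c.γ θ = c.BPt ((c.J θ : ℕ) : ZMod c.n) (θ - c.cum (c.J θ)) := rfl

theorem Cfg.γ_cum {k : ℕ} (hk : k ≤ c.n - 1) : c.γ (c.cum k) = c.BPt (k : ZMod c.n) 0 := by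
  rw [c.γ_block, c.J_cum hk, sub_self]

theorem Cfg.cast_pred : ((c.n - 1 : ℕ) : ZMod c.n) = -1 := by
  have hn := c.hn
  have h2 : ((c.n - 1 : ℕ) : ZMod c.n) + 1 = 0 := by
    have he : ((c.n - 1 : ℕ) + 1 : ℕ) = c.n := by omega
    calc ((c.n - 1 : ℕ) : ZMod c.n) + 1 = (((c.n - 1 : ℕ) + 1 : ℕ) : ZMod c.n) := by
          push_cast; ring
      _ = (c.n : ZMod c.n) := by rw [he]
      _ = 0 := ZMod.natCast_self c.n
  linear_combination h2

theorem Cfg.γ_LP : c.γ c.LP = c.qP (-1) := by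
  have hn := c.hn
  have hJ : c.J c.LP = c.n - 1 := by
    apply le_antisymm (c.J_le _)
    unfold Cfg.J
    exact Nat.le_findGreatest (le_refl _) (c.cum_mono (by omega))
  have hc : c.LP - c.cum (c.n - 1) = c.bL ((c.n - 1 : ℕ) : ZMod c.n) := by
    have := c.cum_succ (c.n - 1)
    rw [show c.n - 1 + 1 = c.n by omega] at this
    unfold Cfg.LP
    linarith
  rw [c.γ_block, hJ, hc, c.BPt_end, c.cast_pred]

theorem Cfg.γ_zero : c.γ 0 = c.qP (-1) := by
  have h0 : c.γ 0 = c.BPt ((0 : ℕ) : ZMod c.n) 0 := by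
    have := c.γ_cum (k := 0) (Nat.zero_le _)
    rw [c.cum_zero] at this
    exact this
  rw [h0]
  push_cast
  rw [c.BPt_zero]
  unfold Cfg.qP Cfg.tb
  rw [show (-1 : ZMod c.n) + 1 = 0 by ring, show (0 : ZMod c.n) - 1 = -1 by ring]

/-! ### block Lipschitz bound -/

theorem Cfg.BPt_lip {j : ZMod c.n} {α α' : ℝ} (h0 : 0 ≤ α) (hle : α ≤ α')
    (h1 : α' ≤ c.bL j) : dist (c.BPt j α) (c.BPt j α') ≤ α' - α := by
  have hcl := c.cL0 j
  have hm := c.mid_nonneg j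
  by_cases hα' : α' ≤ c.mid j
  · have hα : α ≤ c.mid j := le_trans hle hα'
    rw [c.BPt_mid hα, c.BPt_mid hα',
      c.side_dist (c.midparam h0 hα) (c.midparam (le_trans h0 hle) hα')]
    rw [abs_of_nonpos (by linarith)]
    linarith
  · have hβ' : α' - c.mid j ∈ Set.Icc (0 : ℝ) (c.cL j) := by
      constructor
      · linarith [le_of_not_ge hα']
      · unfold Cfg.bL at h1; linarith
    by_cases hα : α ≤ c.mid j
    · rw [c.BPt_mid hα, c.BPt_chord hα']
      have d1 : dist (c.g j (c.tb j + α)) (c.pP j) = c.mid j - α := by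
        rw [c.pP_param j, c.side_dist (c.midparam h0 hα) (c.midparam hm (le_refl _))]
        rw [abs_of_nonpos (by linarith)]
        ring
      have d2 : dist (c.pP j) (c.ch j (α' - c.mid j)) = α' - c.mid j := by
        rw [dist_comm, c.ch_dist_p hβ']
      calc dist (c.g j (c.tb j + α)) (c.ch j (α' - c.mid j)) ≤
            dist (c.g j (c.tb j + α)) (c.pP j) + dist (c.pP j) (c.ch j (α' - c.mid j)) :=
          dist_triangle _ _ _
        _ = (c.mid j - α) + (α' - c.mid j) := by rw [d1, d2]
        _ = α' - α := by ring
    · have hβ : α - c.mid j ∈ Set.Icc (0 : ℝ) (c.cL j) := by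
        constructor
        · linarith [le_of_not_ge hα]
        · unfold Cfg.bL at h1; linarith
      rw [c.BPt_chord hα, c.BPt_chord hα', c.ch_dist hβ hβ']
      rw [abs_of_nonpos (by linarith)]
      linarith

/-- every point of block `j` is `D/3`-close to a point of side `j`. -/
theorem Cfg.block_near (j : ZMod c.n) {α : ℝ} (h0 : 0 ≤ α) (h1 : α ≤ c.bL j) :
    ∃ w, w ∈ Set.Icc (0 : ℝ) (c.SL j) ∧ dist (c.BPt j α) (c.g j w) ≤ c.D / 3 := by
  have hD := c.Dpos
  by_cases hα : α ≤ c.mid j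
  · refine ⟨c.tb j + α, c.midparam h0 hα, ?_⟩
    rw [c.BPt_mid hα, dist_self]
    linarith
  · refine ⟨(c.st j).1, c.st1_mem j, ?_⟩
    rw [c.BPt_chord hα]
    have hβ : α - c.mid j ∈ Set.Icc (0 : ℝ) (c.cL j) := by
      constructor
      · linarith [le_of_not_ge hα]
      · unfold Cfg.bL at h1; linarith
    have := c.ch_dist_p hβ
    unfold Cfg.pP at this
    rw [this]
    have := c.cL_le j
    linarith [hβ.2]

/-- separation of points in non-adjacent blocks. -/
theorem Cfg.sep_blocks {i j : ZMod c.n} (h1 : j ≠ i - 1) (h2 : j ≠ i) (h3 : j ≠ i + 1)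
    {α α' : ℝ} (ha0 : 0 ≤ α) (ha1 : α ≤ c.bL i) (hb0 : 0 ≤ α') (hb1 : α' ≤ c.bL j) :
    c.D / 3 ≤ dist (c.BPt i α) (c.BPt j α') := by
  obtain ⟨wi, hwi, hdi⟩ := c.block_near i ha0 ha1
  obtain ⟨wj, hwj, hdj⟩ := c.block_near j hb0 hb1
  have hsep := c.sepD h1 h2 h3 hwi hwj
  have tri : dist (c.g i wi) (c.g j wj) ≤
      dist (c.g i wi) (c.BPt i α) + dist (c.BPt i α) (c.BPt j α') +
        dist (c.BPt j α') (c.g j wj) := dist_triangle4 _ _ _ _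
  rw [dist_comm (c.g i wi) (c.BPt i α)] at tri
  linarith

/-! ### sums -/

theorem Cfg.sum_range_zmod [NeZero c.n] (f : ZMod c.n → ℝ) :
    ∑ j ∈ Finset.range c.n, f (j : ZMod c.n) = ∑ i : ZMod c.n, f i := by
  haveI := c.nz
  refine Finset.sum_nbij' (fun j => (j : ZMod c.n)) (fun i => i.val) ?_ ?_ ?_ ?_ ?_
  · intro a _; exact Finset.mem_univ _
  · intro a _; exact Finset.mem_range.mpr (ZMod.val_lt a)
  · intro a ha; exact ZMod.val_cast_of_lt (Finset.mem_range.mp ha)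
  · intro a _; exact ZMod.natCast_rightInverse a
  · intro a _; rfl

theorem Cfg.sum_shift [NeZero c.n] (f : ZMod c.n → ℝ) (z : ZMod c.n) :
    ∑ i : ZMod c.n, f (i + z) = ∑ i : ZMod c.n, f i := by
  haveI := c.nz
  exact Fintype.sum_equiv (Equiv.addRight z) _ _ (fun i => rfl)

theorem Cfg.card_univ_zmod [NeZero c.n] : (Finset.univ : Finset (ZMod c.n)).card = c.n := by
  haveI := c.nz
  simp [ZMod.card]

theorem Cfg.LP_ge : 2 * (c.n : ℝ) * c.D / 3 ≤ c.LP := by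
  haveI := c.nz
  have h1 : c.LP = ∑ i : ZMod c.n, c.bL i := c.sum_range_zmod c.bL
  have h2 : ∑ i : ZMod c.n, (c.D - c.cL (i - 1)) ≤ ∑ i : ZMod c.n, c.bL i := by
    apply Finset.sum_le_sum
    intro i _
    have := c.mid_ge i
    unfold Cfg.bL
    linarith
  have h3 : ∑ i : ZMod c.n, c.cL (i - 1) = ∑ i : ZMod c.n, c.cL i := by
    have := c.sum_shift c.cL (-1)
    simpa [sub_eq_add_neg] using this
  have h4 : ∑ i : ZMod c.n, c.cL i ≤ (c.n : ℝ) * (c.D / 3) := by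
    calc ∑ i : ZMod c.n, c.cL i ≤ ∑ _i : ZMod c.n, (c.D / 3) :=
        Finset.sum_le_sum (fun i _ => c.cL_le i)
      _ = (c.n : ℝ) * (c.D / 3) := by
        rw [Finset.sum_const, c.card_univ_zmod, nsmul_eq_mul]
  have h5 : ∑ i : ZMod c.n, (c.D - c.cL (i - 1)) =
      (c.n : ℝ) * c.D - ∑ i : ZMod c.n, c.cL (i - 1) := by
    rw [Finset.sum_sub_distrib, Finset.sum_const, c.card_univ_zmod, nsmul_eq_mul]
  rw [h3] at h5
  have := h2
  rw [h5] at this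
  rw [h1]
  linarith

theorem Cfg.LP_le : c.LP ≤ (c.n : ℝ) * (c.R + c.D / 3) := by
  haveI := c.nz
  have h1 : c.LP = ∑ i : ZMod c.n, c.bL i := c.sum_range_zmod c.bL
  rw [h1]
  calc ∑ i : ZMod c.n, c.bL i ≤ ∑ _i : ZMod c.n, (c.R + c.D / 3) :=
      Finset.sum_le_sum (fun i _ => c.bL_le i)
    _ = (c.n : ℝ) * (c.R + c.D / 3) := by
      rw [Finset.sum_const, c.card_univ_zmod, nsmul_eq_mul]

theorem Cfg.nR : (4 : ℝ) ≤ (c.n : ℝ) ∧ (1 : ℝ) ≤ c.R := by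
  constructor
  · exact_mod_cast c.hn
  · linarith [c.hD, c.hRD]

theorem Cfg.LP_ge_one : (8 : ℝ) / 3 ≤ c.LP := by
  have := c.LP_ge
  have h4 : (4 : ℝ) ≤ (c.n : ℝ) := c.nR.1
  have hD := c.hD
  nlinarith

/-! ### the key optimality inequality -/

theorem Cfg.sub_one_ne (i : ZMod c.n) : i - 1 ≠ i := by
  intro h
  exact zmod_one_ne c.hn (by linear_combination -h)

theorem Cfg.sum_update (i : ZMod c.n) (v : ℝ × ℝ) :
    (∑ j ∈ Finset.range c.n,
      ((Function.update c.st i v (j : ZMod c.n)).2 - (Function.update c.st i v (j : ZMod c.n)).1))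
    = (∑ j ∈ Finset.range c.n, ((c.st (j : ZMod c.n)).2 - (c.st (j : ZMod c.n)).1))
      + ((v.2 - v.1) - ((c.st i).2 - (c.st i).1)) := by
  haveI := c.nz
  rw [c.sum_range_zmod (fun idx => (Function.update c.st i v idx).2 -
    (Function.update c.st i v idx).1)]
  rw [c.sum_range_zmod (fun idx => (c.st idx).2 - (c.st idx).1)]
  have hfe : (fun idx => (Function.update c.st i v idx).2 - (Function.update c.st i v idx).1)
      = Function.update (fun idx => (c.st idx).2 - (c.st idx).1) i (v.2 - v.1) := by
    funext idx
    by_cases h : idx = i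
    · subst h; simp
    · simp [Function.update_apply, h]
  rw [hfe, Finset.sum_update_of_mem (Finset.mem_univ i)]
  rw [Finset.sum_eq_sum_sdiff_singleton_add (Finset.mem_univ i)
    (fun idx => (c.st idx).2 - (c.st idx).1)]
  ring

theorem Cfg.key_opt (i : ZMod c.n) (v : ℝ × ℝ)
    (h1 : v.1 ∈ Set.Icc (0 : ℝ) (c.SL i)) (h2 : v.2 ∈ Set.Icc (0 : ℝ) (c.SL (i + 1)))
    (h3 : dist (c.g i v.1) (c.g (i + 1) v.2) ≤ c.D / 3)
    (h4 : c.tb i ≤ v.1) (h5 : v.2 ≤ (c.st (i + 1)).1) :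
    v.2 - v.1 ≤ (c.st i).2 - (c.st i).1 := by
  have hfeas : ∀ k, (Function.update c.st i v k).1 ∈
        Set.Icc (0 : ℝ) (dist (c.a k) (c.a (k + 1))) ∧
      (Function.update c.st i v k).2 ∈
        Set.Icc (0 : ℝ) (dist (c.a (k + 1)) (c.a (k + 1 + 1))) ∧
      dist (c.g k (Function.update c.st i v k).1)
        (c.g (k + 1) (Function.update c.st i v k).2) ≤ c.D / 3 ∧
      (Function.update c.st i v (k - 1)).2 ≤ (Function.update c.st i v k).1 := by
    intro k
    by_cases hk : k = i
    · subst hk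
      rw [Function.update_self]
      have hkm : k - 1 ≠ k := c.sub_one_ne k
      rw [Function.update_of_ne hkm]
      exact ⟨h1, h2, h3, h4⟩
    · rw [Function.update_of_ne hk]
      refine ⟨c.hst1 k, c.hst2 k, c.hC3 k, ?_⟩
      by_cases hk1 : k - 1 = i
      · rw [hk1, Function.update_self]
        have hki : k = i + 1 := by
          have : k - 1 + 1 = i + 1 := by rw [hk1]
          rw [← this]; ring
        rw [hki]
        exact h5
      · rw [Function.update_of_ne hk1]
        exact c.hC4 k
  have := c.hopt (Function.update c.st i v) hfeas
  rw [c.sum_update i v] at this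
  linarith


/-! ### the master estimates -/

theorem Cfg.hC4' (j : ZMod c.n) : (c.st j).2 ≤ (c.st (j + 1)).1 := by
  have := c.hC4 (j + 1)
  rw [show j + 1 - 1 = j by ring] at this
  exact this

theorem Cfg.same_master (j : ZMod c.n) {α α' : ℝ} (h0 : 0 ≤ α) (hle : α ≤ α')
    (h1 : α' ≤ c.bL j) :
    α' - α ≤ 3 * dist (c.BPt j α) (c.BPt j α') ∨
      c.D / 3 ≤ dist (c.BPt j α) (c.BPt j α') := by
  have hm := c.mid_nonneg j
  have hcl := c.cL0 j
  by_cases hα' : α' ≤ c.mid j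
  · left
    have hα : α ≤ c.mid j := le_trans hle hα'
    have : dist (c.BPt j α) (c.BPt j α') = α' - α := by
      rw [c.BPt_mid hα, c.BPt_mid hα',
        c.side_dist (c.midparam h0 hα) (c.midparam (le_trans h0 hle) hα')]
      rw [abs_of_nonpos (by linarith)]; ring
    rw [this]; linarith
  · have hβ' : α' - c.mid j ∈ Set.Icc (0 : ℝ) (c.cL j) := by
      constructor
      · linarith [le_of_not_ge hα']
      · unfold Cfg.bL at h1; linarith
    by_cases hα : α ≤ c.mid j
    · -- u in the middle, v on the chord
      set ε := dist (c.BPt j α) (c.BPt j α') with hε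
      set A := c.mid j - α with hA
      set B := α' - c.mid j with hB
      have hB0 : 0 < B := by rw [hB]; linarith [le_of_not_ge hα']
      have hA0 : 0 ≤ A := by rw [hA]; linarith
      have hu : c.BPt j α = c.g j (c.tb j + α) := c.BPt_mid hα
      have hv : c.BPt j α' = c.ch j B := c.BPt_chord hα'
      have hvp : dist (c.ch j B) (c.pP j) = B := c.ch_dist_p hβ'
      have hvq : dist (c.ch j B) (c.qP j) = c.cL j - B := c.ch_dist_q hβ'
      by_cases hεB : B ≤ ε
      · left
        have hup : dist (c.BPt j α) (c.pP j) = A := by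
          rw [hu, c.pP_param j, c.side_dist (c.midparam h0 hα) (c.midparam hm (le_refl _))]
          rw [abs_of_nonpos (by linarith)]; rw [hA]; ring
        have htri : A ≤ ε + B := by
          calc A = dist (c.BPt j α) (c.pP j) := hup.symm
            _ ≤ dist (c.BPt j α) (c.BPt j α') + dist (c.BPt j α') (c.pP j) :=
              dist_triangle _ _ _
            _ = ε + B := by rw [← hε, hv, hvp]
        have : α' - α = A + B := by rw [hA, hB]; ring
        rw [this]
        have hε0 : 0 ≤ ε := by rw [hε]; exact dist_nonneg
        linarith
      · exfalso
        push_neg at hεB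
        have hkey := c.key_opt j (c.tb j + α, (c.st j).2)
          (c.midparam h0 hα) (c.st2_mem j) ?_ (by simp; linarith) (c.hC4' j)
        · -- conclusion: (st j).2 - (tb j + α) ≤ (st j).2 - (st j).1
          simp only at hkey
          have hA0' : A ≤ 0 := by
            have hmid : c.mid j = (c.st j).1 - c.tb j := rfl
            rw [hA, hmid]; linarith
          have hAeq : A = 0 := le_antisymm hA0' hA0
          have hparam : c.tb j + α = (c.st j).1 := by
            have hmid : c.mid j = (c.st j).1 - c.tb j := rfl
            rw [hA, hmid] at hAeq; linarith
          have : ε = B := by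
            rw [hε, hu, hv, hparam]
            rw [show c.g j (c.st j).1 = c.pP j from rfl, dist_comm]
            exact hvp
          linarith
        · -- the distance condition for the candidate
          simp only
          have h3 : dist (c.g j (c.tb j + α)) (c.qP j) ≤ ε + (c.cL j - B) := by
            calc dist (c.g j (c.tb j + α)) (c.qP j) ≤
                dist (c.g j (c.tb j + α)) (c.ch j B) + dist (c.ch j B) (c.qP j) :=
                dist_triangle _ _ _
              _ = ε + (c.cL j - B) := by rw [hvq, hε, hu, hv]
          have : ε + (c.cL j - B) < c.cL j := by linarith
          have hle3 := c.cL_le j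
          calc dist (c.g j (c.tb j + α)) (c.g (j + 1) (c.st j).2)
              = dist (c.g j (c.tb j + α)) (c.qP j) := rfl
            _ ≤ ε + (c.cL j - B) := h3
            _ ≤ c.cL j := by linarith
            _ ≤ c.D / 3 := hle3
    · -- both on the chord: exact
      left
      have hβ : α - c.mid j ∈ Set.Icc (0 : ℝ) (c.cL j) := by
        constructor
        · linarith [le_of_not_ge hα]
        · unfold Cfg.bL at h1; linarith
      have : dist (c.BPt j α) (c.BPt j α') = α' - α := by
        rw [c.BPt_chord hα, c.BPt_chord hα', c.ch_dist hβ hβ']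
        rw [abs_of_nonpos (by linarith)]; ring
      rw [this]
      linarith


theorem Cfg.tb_succ (i : ZMod c.n) : c.tb (i + 1) = (c.st i).2 := by
  unfold Cfg.tb
  rw [show i + 1 - 1 = i by ring]

theorem Cfg.succ_master (i : ZMod c.n) {α α' : ℝ} (h0 : 0 ≤ α) (h1 : α ≤ c.bL i)
    (h0' : 0 ≤ α') (h1' : α' ≤ c.bL (i + 1)) :
    (c.bL i - α) + α' ≤ 3 * dist (c.BPt i α) (c.BPt (i + 1) α') ∨
      c.D / 3 ≤ dist (c.BPt i α) (c.BPt (i + 1) α') := by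
  have hm := c.mid_nonneg i
  have hm' := c.mid_nonneg (i + 1)
  have hcl := c.cL0 i
  have hcl' := c.cL0 (i + 1)
  by_cases hα' : α' ≤ c.mid (i + 1)
  · -- v is on the middle of side (i+1)
    have hv : c.BPt (i + 1) α' = c.g (i + 1) (c.tb (i + 1) + α') := c.BPt_mid hα'
    have hqv : dist (c.qP i) (c.BPt (i + 1) α') = α' := by
      rw [← c.BPt_start_next i, c.BPt_zero (i + 1), hv,
        c.side_dist (c.tb_mem (i + 1)) (c.midparam h0' hα')]
      rw [show c.tb (i + 1) - (c.tb (i + 1) + α') = -α' by ring, abs_neg,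
        abs_of_nonneg h0']
    by_cases hα : α ≤ c.mid i
    · -- (mid, mid)
      set ε := dist (c.BPt i α) (c.BPt (i + 1) α') with hε
      by_cases hd : c.D / 3 < ε
      · right; linarith
      · push_neg at hd
        have hu : c.BPt i α = c.g i (c.tb i + α) := c.BPt_mid hα
        have hkey := c.key_opt i (c.tb i + α, (c.st i).2 + α')
          (c.midparam h0 hα) ?_ ?_ (by simp; linarith) ?_
        · simp only at hkey
          have hz : (c.mid i - α) + α' ≤ 0 := by
            have hmid : c.mid i = (c.st i).1 - c.tb i := rfl
            rw [hmid]; linarith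
          have hα'0 : α' = 0 := by linarith [sub_nonneg.mpr hα]
          have hαm : α = c.mid i := by linarith [sub_nonneg.mpr hα]
          left
          have hεc : ε = c.cL i := by
            rw [hε, hα'0, c.BPt_start_next i, hu, hαm, ← c.pP_param i]
            rfl
          rw [hεc, hα'0, hαm]
          unfold Cfg.bL
          have := c.cL0 i
          linarith
        · -- range of the second coordinate
          rw [← c.tb_succ i]
          exact c.midparam h0' hα'
        · -- distance condition
          have : c.g (i + 1) ((c.st i).2 + α') = c.BPt (i + 1) α' := by
            rw [hv, c.tb_succ i]
          rw [this]
          rw [show c.g i (c.tb i + α) = c.BPt i α from hu.symm]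
          exact hd
        · -- h5
          simp only
          have ht := c.tb_succ i
          unfold Cfg.mid at hα'
          linarith [hα', ht]
    · -- (chord_i, mid_{i+1})
      have hβ : α - c.mid i ∈ Set.Icc (0 : ℝ) (c.cL i) := by
        constructor
        · linarith [le_of_not_ge hα]
        · unfold Cfg.bL at h1; linarith
      set ε := dist (c.BPt i α) (c.BPt (i + 1) α') with hε
      set B := c.cL i - (α - c.mid i) with hB
      have hB0 : 0 ≤ B := by rw [hB]; unfold Cfg.bL at h1; linarith
      have hu : c.BPt i α = c.ch i (α - c.mid i) := c.BPt_chord hα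
      have huq : dist (c.BPt i α) (c.qP i) = B := by
        rw [hu, hB]; exact c.ch_dist_q hβ
      by_cases hεB : B ≤ ε
      · left
        have htri : α' ≤ B + ε := by
          calc α' = dist (c.qP i) (c.BPt (i + 1) α') := hqv.symm
            _ ≤ dist (c.qP i) (c.BPt i α) + dist (c.BPt i α) (c.BPt (i + 1) α') :=
              dist_triangle _ _ _
            _ = B + ε := by rw [dist_comm (c.qP i) (c.BPt i α), huq, hε]
        have harc : (c.bL i - α) + α' = B + α' := by rw [hB]; unfold Cfg.bL; ring
        rw [harc]
        linarith
      · exfalso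
        push_neg at hεB
        have hup : dist (c.pP i) (c.BPt i α) = α - c.mid i := by
          rw [hu, dist_comm]; exact c.ch_dist_p hβ
        have hkey := c.key_opt i ((c.st i).1, (c.st i).2 + α')
          (c.st1_mem i) ?_ ?_ ?_ ?_
        · simp only at hkey
          have hα'0 : α' = 0 := by linarith
          have : ε = B := by
            rw [hε, hα'0, c.BPt_start_next i, ← huq]
          linarith
        · rw [← c.tb_succ i]
          exact c.midparam h0' hα'
        · -- distance condition
          have hv' : c.g (i + 1) ((c.st i).2 + α') = c.BPt (i + 1) α' := by
            rw [hv, c.tb_succ i]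
          rw [hv']
          have htri2 : dist (c.g i (c.st i).1) (c.BPt (i + 1) α') ≤
              (α - c.mid i) + ε := by
            calc dist (c.g i (c.st i).1) (c.BPt (i + 1) α')
                ≤ dist (c.pP i) (c.BPt i α) + dist (c.BPt i α) (c.BPt (i + 1) α') :=
                dist_triangle _ _ _
              _ = (α - c.mid i) + ε := by rw [hup, hε]
          have hcle := c.cL_le i
          have : (α - c.mid i) + ε < c.cL i := by rw [hB] at hεB; linarith
          linarith
        · exact c.hC4 i
        · simp only
          have ht := c.tb_succ i
          unfold Cfg.mid at hα'
          linarith [hα', ht]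
  · -- v on the chord of block (i+1): separation through sides i and i+2
    right
    have hβ' : α' - c.mid (i + 1) ∈ Set.Icc (0 : ℝ) (c.cL (i + 1)) := by
      constructor
      · linarith [le_of_not_ge hα']
      · unfold Cfg.bL at h1'; linarith
    have hvq : dist (c.BPt (i + 1) α') (c.qP (i + 1)) ≤ c.D / 3 := by
      rw [c.BPt_chord hα', c.ch_dist_q hβ']
      have := c.cL_le (i + 1)
      linarith [hβ'.1]
    obtain ⟨w, hw, hdw⟩ := c.block_near i h0 h1
    have hna := nonadjB c.hn i
    have hw2 : (c.st (i + 1)).2 ∈ Set.Icc (0 : ℝ) (c.SL (i + 2)) := by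
      have := c.st2_mem (i + 1)
      rw [show i + 1 + 1 = i + 2 by ring] at this
      exact this
    have hsep := c.sepD hna.1 hna.2.1 hna.2.2 hw hw2
    have hq2 : c.qP (i + 1) = c.g (i + 2) (c.st (i + 1)).2 := by
      unfold Cfg.qP
      rw [show i + 1 + 1 = i + 2 by ring]
    have tri : dist (c.g i w) (c.g (i + 2) (c.st (i + 1)).2) ≤
        dist (c.g i w) (c.BPt i α) + dist (c.BPt i α) (c.BPt (i + 1) α') +
          dist (c.BPt (i + 1) α') (c.g (i + 2) (c.st (i + 1)).2) := dist_triangle4 _ _ _ _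
    rw [dist_comm (c.g i w) (c.BPt i α)] at tri
    rw [← hq2] at tri hsep
    linarith


/-! ### the loop is 1-Lipschitz in arc length -/

theorem Cfg.same_block_lip {θ θ' : ℝ} (h0 : 0 ≤ θ) (hle : θ ≤ θ') (hL : θ' ≤ c.LP)
    (hJ : c.J θ = c.J θ') : dist (c.γ θ) (c.γ θ') ≤ θ' - θ := by
  have ha0 : 0 ≤ θ - c.cum (c.J θ) := by linarith [c.J_cum_le h0]
  have ha1 : θ' - c.cum (c.J θ) ≤ c.bL ((c.J θ : ℕ) : ZMod c.n) := by
    have h2 := c.J_next (θ := θ') hL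
    rw [← hJ] at h2
    have h3 := c.cum_succ (c.J θ)
    linarith
  have := c.BPt_lip (j := ((c.J θ : ℕ) : ZMod c.n)) ha0 (by linarith : θ - c.cum (c.J θ) ≤ θ' - c.cum (c.J θ)) ha1
  rw [c.γ_block (θ := θ), c.γ_block (θ := θ'), ← hJ]
  linarith

theorem Cfg.chord_arc (N : ℕ) : ∀ θ θ' : ℝ, 0 ≤ θ → θ ≤ θ' → θ' ≤ c.LP →
    c.J θ' - c.J θ ≤ N → dist (c.γ θ) (c.γ θ') ≤ θ' - θ := by
  induction N with
  | zero =>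
    intro θ θ' h0 hle hL hN
    have hJ : c.J θ = c.J θ' := le_antisymm (c.J_mono hle) (by omega)
    exact c.same_block_lip h0 hle hL hJ
  | succ N ih =>
    intro θ θ' h0 hle hL hN
    by_cases hJ : c.J θ = c.J θ'
    · exact c.same_block_lip h0 hle hL hJ
    · have hlt : c.J θ < c.J θ' := lt_of_le_of_ne (c.J_mono hle) hJ
      set M := c.cum (c.J θ + 1) with hM
      have hθM : θ ≤ M := c.J_next (le_trans hle hL)
      have hMθ' : M ≤ θ' := le_trans (c.cum_mono hlt) (c.J_cum_le (le_trans h0 hle))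
      have hkn : c.J θ + 1 ≤ c.n - 1 := le_trans hlt (c.J_le θ')
      have hJM : c.J M = c.J θ + 1 := c.J_cum hkn
      have hγM : c.γ M = c.BPt (((c.J θ : ℕ) : ZMod c.n) + 1) 0 := by
        have := c.γ_cum hkn
        rw [← hM] at this
        rw [this]
        push_cast
        ring_nf
      have d1 : dist (c.γ θ) (c.γ M) ≤ M - θ := by
        rw [hγM, c.BPt_start_next, ← c.BPt_end]
        have ha0 : 0 ≤ θ - c.cum (c.J θ) := by linarith [c.J_cum_le h0]
        have hbb : M - c.cum (c.J θ) = c.bL ((c.J θ : ℕ) : ZMod c.n) := by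
          rw [hM, c.cum_succ]; ring
        have := c.BPt_lip (j := ((c.J θ : ℕ) : ZMod c.n)) ha0
          (by linarith : θ - c.cum (c.J θ) ≤ c.bL ((c.J θ : ℕ) : ZMod c.n)) (le_refl _)
        rw [c.γ_block (θ := θ)]
        linarith
      have d2 : dist (c.γ M) (c.γ θ') ≤ θ' - M := by
        apply ih M θ' (le_trans h0 hθM) hMθ' hL
        omega
      calc dist (c.γ θ) (c.γ θ') ≤ dist (c.γ θ) (c.γ M) + dist (c.γ M) (c.γ θ') :=
          dist_triangle _ _ _
        _ ≤ (M - θ) + (θ' - M) := by linarith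
        _ = θ' - θ := by ring

theorem Cfg.arc_lip {θ θ' : ℝ} (h0 : 0 ≤ θ) (hle : θ ≤ θ') (hL : θ' ≤ c.LP) :
    dist (c.γ θ) (c.γ θ') ≤ θ' - θ :=
  c.chord_arc (c.J θ') θ θ' h0 hle hL (Nat.sub_le _ _)

theorem Cfg.arc_lip_wrap {θ θ' : ℝ} (h0 : 0 ≤ θ) (hle : θ ≤ θ') (hL : θ' ≤ c.LP) :
    dist (c.γ θ) (c.γ θ') ≤ (c.LP - θ') + θ := by
  have h1 : dist (c.γ 0) (c.γ θ) ≤ θ - 0 := c.arc_lip (le_refl _) h0 (le_trans hle hL)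
  have h2 : dist (c.γ θ') (c.γ c.LP) ≤ c.LP - θ' := c.arc_lip (le_trans h0 hle) hL (le_refl _)
  have h3 : c.γ 0 = c.γ c.LP := by rw [c.γ_zero, c.γ_LP]
  calc dist (c.γ θ) (c.γ θ') ≤ dist (c.γ θ) (c.γ 0) + dist (c.γ 0) (c.γ θ') :=
      dist_triangle _ _ _
    _ = dist (c.γ 0) (c.γ θ) + dist (c.γ θ') (c.γ c.LP) := by
      rw [dist_comm (c.γ θ) (c.γ 0), h3, dist_comm (c.γ c.LP) (c.γ θ')]
    _ ≤ (θ - 0) + (c.LP - θ') := by linarith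
    _ = (c.LP - θ') + θ := by ring


end PGEC

namespace PGEC

/-! ### `cycleDist` -/

theorem cycleDist_comm {m : ℕ} (x y : ZMod m) : cycleDist x y = cycleDist y x := by
  unfold cycleDist
  congr 1
  ext k
  exact or_comm

theorem cycleDist_eq {m : ℕ} [NeZero m] (x y : ZMod m) :
    cycleDist x y = min ((y - x).val) ((x - y).val) := by
  unfold cycleDist
  apply le_antisymm
  · rcases le_total ((y - x).val) ((x - y).val) with h | h
    · rw [min_eq_left h]
      exact Nat.sInf_le (Or.inl (ZMod.natCast_rightInverse _))
    · rw [min_eq_right h]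
      exact Nat.sInf_le (Or.inr (ZMod.natCast_rightInverse _))
  · have hne : {k : ℕ | ((k : ZMod m) = y - x) ∨ ((k : ZMod m) = x - y)}.Nonempty :=
      ⟨(y - x).val, Or.inl (ZMod.natCast_rightInverse _)⟩
    have hmem := Nat.sInf_mem hne
    rcases hmem with h | h
    · calc min ((y - x).val) ((x - y).val) ≤ (y - x).val := min_le_left _ _
        _ ≤ sInf {k : ℕ | ((k : ZMod m) = y - x) ∨ ((k : ZMod m) = x - y)} := by
          conv_lhs => rw [← h]
          rw [ZMod.val_natCast]
          exact Nat.mod_le _ _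
    · calc min ((y - x).val) ((x - y).val) ≤ (x - y).val := min_le_right _ _
        _ ≤ sInf {k : ℕ | ((k : ZMod m) = y - x) ∨ ((k : ZMod m) = x - y)} := by
          conv_lhs => rw [← h]
          rw [ZMod.val_natCast]
          exact Nat.mod_le _ _

theorem val_add_val {m : ℕ} [NeZero m] {x y : ZMod m} (h : x ≠ y) :
    (y - x).val + (x - y).val = m := by
  have h1 : y - x ≠ 0 := sub_ne_zero.mpr (Ne.symm h)
  have h2 : x - y = -(y - x) := by ring
  rw [h2, ZMod.neg_val, if_neg h1]
  have := ZMod.val_lt (y - x)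
  omega

end PGEC

namespace PGEC

theorem clamp_lip (l : ℝ) (s t : ℝ) : |max 0 (min s l) - max 0 (min t l)| ≤ |s - t| := by
  have h1 : |max 0 (min s l) - max 0 (min t l)| ≤ |min s l - min t l| := by
    rw [max_comm 0 (min s l), max_comm 0 (min t l)]
    exact abs_max_sub_max_le_abs _ _ _
  have h2 : |min s l - min t l| ≤ max |s - t| |l - l| := abs_min_sub_min_le_max s l t l
  have h3 : max |s - t| |l - l| = |s - t| := by
    rw [sub_self, abs_zero]
    exact max_eq_left (abs_nonneg _)
  calc |max 0 (min s l) - max 0 (min t l)| ≤ |min s l - min t l| := h1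
    _ ≤ |s - t| := by rw [← h3]; exact h2

end PGEC


namespace PGEC
variable {X : Type*} [MetricSpace X]

set_option maxHeartbeats 2000000 in
theorem Cfg.conclusion (c : Cfg X) :
    ∃ m : ℕ, c.D * c.n / 2 ≤ (m : ℝ) ∧ ∃ φ : ZMod m → X,
      (∀ x y : ZMod m, dist (φ x) (φ y) ≤ (cycleDist x y : ℝ)) ∧
      (∀ x y : ZMod m, (cycleDist x y : ℝ) ≤ (3 * c.n * c.R / c.D) * dist (φ x) (φ y)) := by
  classical
  haveI : NeZero c.n := c.nz
  have hD0 : (0 : ℝ) < c.D := c.Dpos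
  have hDD : (1 : ℝ) ≤ c.D := c.hD
  have hRR : c.D ≤ c.R := c.hRD
  have hnn : 4 ≤ c.n := c.hn
  -- abbreviations and numeric facts
  have hL83 : (8 : ℝ) / 3 ≤ c.LP := c.LP_ge_one
  have hL0 : (0 : ℝ) < c.LP := by linarith
  set m : ℕ := ⌈c.LP⌉₊ with hm
  have hLm : c.LP ≤ (m : ℝ) := Nat.le_ceil _
  have hmL1 : (m : ℝ) < c.LP + 1 := Nat.ceil_lt_add_one (le_of_lt hL0)
  have hm0 : 0 < m := by
    have h : (0 : ℝ) < (m : ℝ) := by linarith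
    exact_mod_cast h
  haveI : NeZero m := ⟨by omega⟩
  set δ : ℝ := c.LP / m with hδ
  have hmR0 : (0 : ℝ) < (m : ℝ) := by exact_mod_cast hm0
  have hδpos : 0 < δ := div_pos hL0 hmR0
  have hmδ : (m : ℝ) * δ = c.LP := by
    rw [hδ]; field_simp
  have hδ1 : δ ≤ 1 := by
    rw [hδ, div_le_one hmR0]; exact hLm
  have hδhalf : 1 / 2 ≤ δ := by
    rw [hδ, le_div_iff₀ hmR0]
    nlinarith
  have hn4 : (4 : ℝ) ≤ (c.n : ℝ) := by exact_mod_cast c.hn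
  have hLge : 2 * (c.n : ℝ) * c.D / 3 ≤ c.LP := c.LP_ge
  have hLle : c.LP ≤ (c.n : ℝ) * (c.R + c.D / 3) := c.LP_le
  have hR1 : (1 : ℝ) ≤ c.R := by linarith
  have hm2nR : (m : ℝ) ≤ 2 * (c.n : ℝ) * c.R := by nlinarith
  have hKD : (3 * (c.n : ℝ) * c.R / c.D) * (c.D / 3) = (c.n : ℝ) * c.R := by
    field_simp
  have hK6 : (6 : ℝ) ≤ 3 * (c.n : ℝ) * c.R / c.D := by
    rw [le_div_iff₀ hD0]; nlinarith
  -- the main two-sided estimate for ordered pairs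
  have main : ∀ x y : ZMod m, x.val ≤ y.val →
      dist (c.γ (x.val * δ)) (c.γ (y.val * δ)) ≤ (cycleDist x y : ℝ) ∧
      (cycleDist x y : ℝ) ≤ (3 * c.n * c.R / c.D) * dist (c.γ (x.val * δ)) (c.γ (y.val * δ)) := by
    intro x y hvle
    by_cases hxy : x = y
    · subst hxy
      have h0 : (cycleDist x x : ℝ) = 0 := by
        rw [cycleDist_eq x x]; simp
      rw [h0, dist_self]
      constructor
      · linarith
      · nlinarith
    · have hvlt : x.val < y.val :=
        lt_of_le_of_ne hvle (fun h => hxy (ZMod.val_injective m h))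
      set vx := x.val with hvx
      set vy := y.val with hvy
      set Δv := vy - vx with hΔv
      have hyx : y - x = ((Δv : ℕ) : ZMod m) := by
        have hx' : ((vx : ℕ) : ZMod m) = x := ZMod.natCast_rightInverse x
        have hy' : ((vy : ℕ) : ZMod m) = y := ZMod.natCast_rightInverse y
        rw [← hx', ← hy', hΔv, Nat.cast_sub hvle]
      have hΔvm : Δv < m := by
        have := ZMod.val_lt y
        omega
      have hΔv0 : 0 < Δv := by omega
      have hv1 : (y - x).val = Δv := by
        rw [hyx, ZMod.val_natCast, Nat.mod_eq_of_lt hΔvm]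
      have hv2 : (x - y).val = m - Δv := by
        have := val_add_val (x := x) (y := y) hxy
        omega
      have hcd : cycleDist x y = min Δv (m - Δv) := by
        rw [cycleDist_eq x y, hv1, hv2]
      set θx : ℝ := vx * δ with hθx
      set θy : ℝ := vy * δ with hθy
      have hθ0 : 0 ≤ θx := mul_nonneg (Nat.cast_nonneg _) (le_of_lt hδpos)
      have hθle : θx ≤ θy := by
        rw [hθx, hθy]
        have hc : (vx : ℝ) ≤ (vy : ℝ) := by exact_mod_cast hvle
        nlinarith
      have hθyL : θy ≤ c.LP := by
        have hvy1 : (vy : ℝ) + 1 ≤ (m : ℝ) := by exact_mod_cast ZMod.val_lt y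
        have h1 : θy ≤ ((m : ℝ) - 1) * δ := by
          rw [hθy]
          nlinarith
        have h2 : ((m : ℝ) - 1) * δ = c.LP - δ := by
          rw [← hmδ]; ring
        linarith
      have hΔreal : θy - θx = (Δv : ℝ) * δ := by
        rw [hθx, hθy, hΔv]
        rw [Nat.cast_sub hvle]
        ring
      have hwrap : c.LP - (θy - θx) = ((m - Δv : ℕ) : ℝ) * δ := by
        have h1 : ((m - Δv : ℕ) : ℝ) = (m : ℝ) - (Δv : ℝ) := by
          rw [Nat.cast_sub (le_of_lt hΔvm)]
        rw [h1, hΔreal, ← hmδ]; ring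
      have harc1 : dist (c.γ θx) (c.γ θy) ≤ θy - θx := c.arc_lip hθ0 hθle hθyL
      have harc2 : dist (c.γ θx) (c.γ θy) ≤ c.LP - (θy - θx) := by
        have := c.arc_lip_wrap hθ0 hθle hθyL
        linarith
      have hcd1 : (cycleDist x y : ℝ) ≤ (Δv : ℝ) := by
        rw [hcd]; exact_mod_cast Nat.cast_le.mpr (min_le_left _ _)
      have hcd2 : (cycleDist x y : ℝ) ≤ ((m - Δv : ℕ) : ℝ) := by
        rw [hcd]; exact_mod_cast Nat.cast_le.mpr (min_le_right _ _)
      have hcd0 : (0 : ℝ) ≤ (cycleDist x y : ℝ) := Nat.cast_nonneg _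
      have hlip : dist (c.γ θx) (c.γ θy) ≤ (cycleDist x y : ℝ) := by
        rcases min_cases Δv (m - Δv) with ⟨hmin, _⟩ | ⟨hmin, _⟩
        · have hcde : (cycleDist x y : ℝ) = (Δv : ℝ) := by rw [hcd, hmin]
          calc dist (c.γ θx) (c.γ θy) ≤ θy - θx := harc1
            _ = (Δv : ℝ) * δ := hΔreal
            _ ≤ (Δv : ℝ) * 1 := by
              have := Nat.cast_nonneg (α := ℝ) Δv
              nlinarith
            _ = (cycleDist x y : ℝ) := by rw [mul_one, hcde]
        · have hcde : (cycleDist x y : ℝ) = ((m - Δv : ℕ) : ℝ) := by rw [hcd, hmin]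
          calc dist (c.γ θx) (c.γ θy) ≤ c.LP - (θy - θx) := harc2
            _ = ((m - Δv : ℕ) : ℝ) * δ := hwrap
            _ ≤ ((m - Δv : ℕ) : ℝ) * 1 := by
              have := Nat.cast_nonneg (α := ℝ) (m - Δv)
              nlinarith
            _ = (cycleDist x y : ℝ) := by rw [mul_one, hcde]
      refine ⟨hlip, ?_⟩
      -- block decomposition
      set j := c.J θx with hj
      set j' := c.J θy with hj'
      have hjle : j ≤ j' := c.J_mono hθle
      have hjn : j' ≤ c.n - 1 := c.J_le θy
      have hcum_jx : c.cum j ≤ θx := c.J_cum_le hθ0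
      have hnext_x : θx ≤ c.cum (j + 1) := c.J_next (le_trans hθle hθyL)
      have hcum_jy : c.cum j' ≤ θy := c.J_cum_le (le_trans hθ0 hθle)
      have hnext_y : θy ≤ c.cum (j' + 1) := c.J_next hθyL
      set ε := dist (c.γ θx) (c.γ θy) with hε
      have hε0 : 0 ≤ ε := dist_nonneg
      have hγx : c.γ θx = c.BPt ((j : ℕ) : ZMod c.n) (θx - c.cum j) := by
        rw [c.γ_block (θ := θx), ← hj]
      have hγy : c.γ θy = c.BPt ((j' : ℕ) : ZMod c.n) (θy - c.cum j') := by
        rw [c.γ_block (θ := θy), ← hj']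
      have hmain2 : (cycleDist x y : ℝ) * δ ≤ 3 * ε ∨ c.D / 3 ≤ ε := by
        by_cases hcase1 : j' = j
        · -- same block
          have hbb := c.cum_succ j
          have hran : θy - c.cum j ≤ c.bL ((j : ℕ) : ZMod c.n) := by
            rw [hcase1] at hnext_y
            linarith
          have hsm := c.same_master ((j : ℕ) : ZMod c.n) (α := θx - c.cum j)
            (α' := θy - c.cum j) (by linarith) (by linarith) hran
          have hid : dist (c.BPt ((j : ℕ) : ZMod c.n) (θx - c.cum j))
              (c.BPt ((j : ℕ) : ZMod c.n) (θy - c.cum j)) = ε := by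
            rw [hε, hγx, hγy, hcase1]
          rw [hid] at hsm
          rcases hsm with h | h
          · left
            have harc : (cycleDist x y : ℝ) * δ ≤ θy - θx := by
              calc (cycleDist x y : ℝ) * δ ≤ (Δv : ℝ) * δ := by nlinarith
                _ = θy - θx := hΔreal.symm
            have : (θy - c.cum j) - (θx - c.cum j) = θy - θx := by ring
            rw [this] at h
            linarith
          · right; exact h
        · by_cases hcase2 : j' = j + 1
          · -- consecutive blocks
            have hbbj := c.cum_succ j
            have hbbj' := c.cum_succ j'
            have hcast : ((j' : ℕ) : ZMod c.n) = ((j : ℕ) : ZMod c.n) + 1 := by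
              rw [hcase2]; push_cast; ring
            have hr1 : θx - c.cum j ≤ c.bL ((j : ℕ) : ZMod c.n) := by
              rw [hcase2] at hcum_jy
              linarith
            have hr2 : θy - c.cum j' ≤ c.bL (((j : ℕ) : ZMod c.n) + 1) := by
              rw [← hcast]
              linarith
            have hsm := c.succ_master ((j : ℕ) : ZMod c.n) (α := θx - c.cum j)
              (α' := θy - c.cum j') (by linarith) hr1 (by linarith) hr2
            have hid : dist (c.BPt ((j : ℕ) : ZMod c.n) (θx - c.cum j))
                (c.BPt (((j : ℕ) : ZMod c.n) + 1) (θy - c.cum j')) = ε := by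
              rw [hε, hγx, hγy, hcast]
            rw [hid] at hsm
            rcases hsm with h | h
            · left
              have harc : (cycleDist x y : ℝ) * δ ≤ θy - θx := by
                calc (cycleDist x y : ℝ) * δ ≤ (Δv : ℝ) * δ := by nlinarith
                  _ = θy - θx := hΔreal.symm
              have hbl : c.bL ((j : ℕ) : ZMod c.n) = c.cum (j + 1) - c.cum j := by
                rw [hbbj]; ring
              have : (c.bL ((j : ℕ) : ZMod c.n) - (θx - c.cum j)) + (θy - c.cum j') =
                  θy - θx := by
                rw [hbl, hcase2]; ring
              rw [this] at h
              linarith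
            · right; exact h
          · have hj2 : j + 2 ≤ j' := by omega
            by_cases hcase3 : j = 0 ∧ j' = c.n - 1
            · -- wrap-around: blocks c.n-1 and 0 are consecutive
              obtain ⟨hj0, hjn1⟩ := hcase3
              have hnn : c.n - 1 + 1 = c.n := by omega
              have hbbj' := c.cum_succ j'
              have hcast0 : (((c.n - 1 : ℕ) : ZMod c.n)) + 1 = ((0 : ℕ) : ZMod c.n) := by
                rw [c.cast_pred]
                push_cast
                ring
              have hr1 : θy - c.cum j' ≤ c.bL (((c.n - 1 : ℕ)) : ZMod c.n) := by
                rw [← hjn1]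
                have : c.cum (j' + 1) = c.cum j' + c.bL ((j' : ℕ) : ZMod c.n) := hbbj'
                linarith
              have hr2 : θx ≤ c.bL ((((c.n - 1 : ℕ)) : ZMod c.n) + 1) := by
                rw [hcast0]
                have h1 : c.cum (0 + 1) = c.cum 0 + c.bL ((0 : ℕ) : ZMod c.n) := c.cum_succ 0
                rw [c.cum_zero] at h1
                rw [hj0] at hnext_x hcum_jx
                rw [c.cum_zero] at hcum_jx
                simp only [zero_add] at h1
                linarith
              have hsm := c.succ_master (((c.n - 1 : ℕ)) : ZMod c.n) (α := θy - c.cum j')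
                (α' := θx) (by linarith) hr1 hθ0 hr2
              have hidy : c.BPt (((c.n - 1 : ℕ)) : ZMod c.n) (θy - c.cum j') = c.γ θy := by
                rw [hγy, hjn1]
              have hidx : c.BPt ((((c.n - 1 : ℕ)) : ZMod c.n) + 1) θx = c.γ θx := by
                rw [hcast0, hγx, hj0, c.cum_zero, sub_zero]
              rw [hidy, hidx, dist_comm (c.γ θy) (c.γ θx)] at hsm
              rw [← hε] at hsm
              rcases hsm with h | h
              · left
                have harc : (cycleDist x y : ℝ) * δ ≤ c.LP - (θy - θx) := by
                  calc (cycleDist x y : ℝ) * δ ≤ ((m - Δv : ℕ) : ℝ) * δ := by nlinarith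
                    _ = c.LP - (θy - θx) := hwrap.symm
                have hLcum : c.LP = c.cum j' + c.bL ((j' : ℕ) : ZMod c.n) := by
                  have : c.cum (j' + 1) = c.cum j' + c.bL ((j' : ℕ) : ZMod c.n) := hbbj'
                  rw [← this, hjn1, hnn]
                  rfl
                have harcid : (c.bL (((c.n - 1 : ℕ)) : ZMod c.n) - (θy - c.cum j')) + θx =
                    c.LP - (θy - θx) := by
                  rw [hLcum, hjn1]
                  ring
                rw [harcid] at h
                linarith
              · right; exact h
            · -- separated blocks
              right
              have hub : j' - j ≤ c.n - 2 := by
                have hcase3' : j ≠ 0 ∨ j' ≠ c.n - 1 := by tauto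
                rcases hcase3' with h' | h' <;> omega
              have hna := nonadjC c.hn hjle (by omega) hub
              have hr1 : θx - c.cum j ≤ c.bL ((j : ℕ) : ZMod c.n) := by
                have hbbj := c.cum_succ j
                have : c.cum (j + 1) ≤ c.cum j' := c.cum_mono (by omega)
                linarith
              have hr2 : θy - c.cum j' ≤ c.bL ((j' : ℕ) : ZMod c.n) := by
                have hbbj' := c.cum_succ j'
                linarith
              have hsb := c.sep_blocks (i := ((j : ℕ) : ZMod c.n)) (j := ((j' : ℕ) : ZMod c.n))
                hna.1 hna.2.1 hna.2.2 (by linarith) hr1 (by linarith) hr2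
              rw [← hγx, ← hγy, ← hε] at hsb
              exact hsb
      rcases hmain2 with h | h
      · -- close pairs
        have h6 : (cycleDist x y : ℝ) ≤ 6 * ε := by nlinarith
        calc (cycleDist x y : ℝ) ≤ 6 * ε := h6
          _ ≤ (3 * c.n * c.R / c.D) * ε := by nlinarith
      · -- separated pairs
        have hcdm : 2 * (cycleDist x y : ℝ) ≤ (m : ℝ) := by
          have hnat : cycleDist x y * 2 ≤ m := by
            rw [hcd]
            omega
          exact_mod_cast by linarith [ (by exact_mod_cast hnat : (cycleDist x y : ℝ) * 2 ≤ (m : ℝ))]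
        have h1 : (cycleDist x y : ℝ) ≤ (c.n : ℝ) * c.R := by linarith
        calc (cycleDist x y : ℝ) ≤ (c.n : ℝ) * c.R := h1
          _ = (3 * (c.n : ℝ) * c.R / c.D) * (c.D / 3) := hKD.symm
          _ ≤ (3 * c.n * c.R / c.D) * ε := by
            apply mul_le_mul_of_nonneg_left h
            linarith
  refine ⟨m, ?_, fun x : ZMod m => c.γ (x.val * δ), ?_, ?_⟩
  · -- c.D * c.n / 2 ≤ m
    nlinarith
  · intro x y
    rcases le_total x.val y.val with h | h
    · exact (main x y h).1
    · have := (main y x h).1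
      rw [dist_comm (c.γ (y.val * δ)) (c.γ (x.val * δ)), cycleDist_comm y x] at this
      exact this
  · intro x y
    rcases le_total x.val y.val with h | h
    · exact (main x y h).2
    · have := (main y x h).2
      rw [dist_comm (c.γ (y.val * δ)) (c.γ (x.val * δ)), cycleDist_comm y x] at this
      exact this

end PGEC
open PGEC in
/-- Let `n ≥ 4`, `D ≥ 1`, and let `X` be a geodesic space containing a geodesic `n`-gon
`[a₁,…,aₙ]` whose non-adjacent sides are at distance at least `D`, with all sides of
length at most `R` where `R ≥ D`.  Then there is a cycle `C` of length at least `Dn/2`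
and a `1`-Lipschitz embedding `φ : C → X` contracting distances by at most `3nR/D`. -/
theorem polygon_gives_embedded_cycle
    {X : Type*} [MetricSpace X] (hgeo : GeodesicSpace X)
    (n : ℕ) (hn : 4 ≤ n) (D R : ℝ) (hD : 1 ≤ D) (hR : D ≤ R)
    (a : ZMod n → X) (g : ZMod n → ℝ → X)
    (hg : ∀ i : ZMod n, IsGeodesicFrom (g i) (a i) (a (i + 1)))
    (hside : ∀ i : ZMod n, dist (a i) (a (i + 1)) ≤ R)
    (hsep : ∀ i j : ZMod n, j ≠ i - 1 → j ≠ i → j ≠ i + 1 →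
      ∀ p ∈ g i '' Set.Icc (0 : ℝ) (dist (a i) (a (i + 1))),
      ∀ q ∈ g j '' Set.Icc (0 : ℝ) (dist (a j) (a (j + 1))),
        D ≤ dist p q) :
    ∃ m : ℕ, D * n / 2 ≤ (m : ℝ) ∧ ∃ φ : ZMod m → X,
      (∀ x y : ZMod m, dist (φ x) (φ y) ≤ (cycleDist x y : ℝ)) ∧
      (∀ x y : ZMod m, (cycleDist x y : ℝ) ≤ (3 * n * R / D) * dist (φ x) (φ y)) := by
  classical
  haveI : NeZero n := ⟨by omega⟩
  have hl0 : ∀ i : ZMod n, (0 : ℝ) ≤ dist (a i) (a (i + 1)) := fun i => dist_nonneg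
  have hD0 : (0 : ℝ) < D := lt_of_lt_of_le one_pos hD
  -- the clamped geodesics
  set G : ZMod n → ℝ → X :=
    fun i s => g i (max 0 (min s (dist (a i) (a (i + 1))))) with hG
  have hclamp_mem : ∀ (i : ZMod n) (s : ℝ),
      max 0 (min s (dist (a i) (a (i + 1)))) ∈ Set.Icc (0 : ℝ) (dist (a i) (a (i + 1))) :=
    fun i s => ⟨le_max_left _ _, max_le (hl0 i) (min_le_right _ _)⟩
  have hGg : ∀ (i : ZMod n) (s : ℝ), s ∈ Set.Icc (0 : ℝ) (dist (a i) (a (i + 1))) →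
      G i s = g i s := by
    intro i s hs
    rw [hG]
    simp only
    rw [min_eq_left hs.2, max_eq_right hs.1]
  have hGcont : ∀ i : ZMod n, Continuous (G i) := by
    intro i
    apply LipschitzWith.continuous (K := 1)
    apply LipschitzWith.of_dist_le_mul
    intro s t
    have hd := (hg i).2.2 _ (hclamp_mem i s) _ (hclamp_mem i t)
    rw [hG]
    simp only
    rw [hd, Real.dist_eq, NNReal.coe_one, one_mul]
    exact clamp_lip _ s t
  -- the compact feasible set
  set S : Set (ZMod n → ℝ × ℝ) :=
    {f | ∀ i : ZMod n, (f i).1 ∈ Set.Icc (0 : ℝ) (dist (a i) (a (i + 1))) ∧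
      (f i).2 ∈ Set.Icc (0 : ℝ) (dist (a (i + 1)) (a (i + 1 + 1))) ∧
      dist (G i (f i).1) (G (i + 1) (f i).2) ≤ D / 3 ∧
      (f (i - 1)).2 ≤ (f i).1} with hSdef
  have hS_closed : IsClosed S := by
    have hrw : S = ⋂ i : ZMod n,
        ({f : ZMod n → ℝ × ℝ | (f i).1 ∈ Set.Icc (0 : ℝ) (dist (a i) (a (i + 1)))} ∩
         {f | (f i).2 ∈ Set.Icc (0 : ℝ) (dist (a (i + 1)) (a (i + 1 + 1)))} ∩
         {f | dist (G i (f i).1) (G (i + 1) (f i).2) ≤ D / 3} ∩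
         {f | (f (i - 1)).2 ≤ (f i).1}) := by
      rw [hSdef]
      ext f
      simp only [Set.mem_setOf_eq, Set.mem_iInter, Set.mem_inter_iff]
      constructor
      · intro h i; obtain ⟨h1, h2, h3, h4⟩ := h i; exact ⟨⟨⟨h1, h2⟩, h3⟩, h4⟩
      · intro h i; obtain ⟨⟨⟨h1, h2⟩, h3⟩, h4⟩ := h i; exact ⟨h1, h2, h3, h4⟩
    rw [hrw]
    apply isClosed_iInter
    intro i
    refine IsClosed.inter (IsClosed.inter (IsClosed.inter ?_ ?_) ?_) ?_
    · exact IsClosed.preimage ((continuous_apply i).fst) isClosed_Icc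
    · exact IsClosed.preimage ((continuous_apply i).snd) isClosed_Icc
    · apply isClosed_le _ continuous_const
      exact Continuous.dist ((hGcont i).comp ((continuous_apply i).fst))
        ((hGcont (i + 1)).comp ((continuous_apply i).snd))
    · exact isClosed_le ((continuous_apply (i - 1)).snd) ((continuous_apply i).fst)
  have hS_cpt : IsCompact S := by
    apply IsCompact.of_isClosed_subset
      (isCompact_univ_pi (fun i : ZMod n =>
        (isCompact_Icc (a := (0 : ℝ)) (b := dist (a i) (a (i + 1)))).prod
          (isCompact_Icc (a := (0 : ℝ)) (b := dist (a (i + 1)) (a (i + 1 + 1))))))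
      hS_closed
    intro f hf i _
    rw [hSdef] at hf
    exact Set.mk_mem_prod (hf i).1 (hf i).2.1
  have hS_ne : S.Nonempty := by
    refine ⟨fun i => (dist (a i) (a (i + 1)), 0), ?_⟩
    rw [hSdef]
    intro i
    refine ⟨⟨hl0 i, le_refl _⟩, ⟨le_refl _, hl0 _⟩, ?_, hl0 i⟩
    have e1 : G i (dist (a i) (a (i + 1))) = a (i + 1) := by
      rw [hGg i _ ⟨hl0 i, le_refl _⟩]
      exact (hg i).2.1
    have e2 : G (i + 1) 0 = a (i + 1) := by
      rw [hGg (i + 1) 0 ⟨le_refl _, hl0 (i + 1)⟩]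
      exact (hg (i + 1)).1
    rw [e1, e2, dist_self]
    linarith
  have hF_cont : Continuous (fun f : ZMod n → ℝ × ℝ =>
      ∑ j ∈ Finset.range n, ((f (j : ZMod n)).2 - (f (j : ZMod n)).1)) := by
    apply continuous_finset_sum
    intro j _
    exact ((continuous_apply _).snd).sub ((continuous_apply _).fst)
  obtain ⟨fmax, hfmaxS, hfmax⟩ := hS_cpt.exists_isMaxOn hS_ne hF_cont.continuousOn
  have hfmaxS' := hfmaxS
  rw [hSdef] at hfmaxS'
  -- chords
  choose ch hch using fun i : ZMod n => hgeo (g i (fmax i).1) (g (i + 1) (fmax i).2)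
  -- the configuration
  have hC3g : ∀ i : ZMod n, dist (g i (fmax i).1) (g (i + 1) (fmax i).2) ≤ D / 3 := by
    intro i
    have := (hfmaxS' i).2.2.1
    rwa [hGg i _ (hfmaxS' i).1, hGg (i + 1) _ (hfmaxS' i).2.1] at this
  set c : Cfg X :=
    { n := n, D := D, R := R, a := a, g := g, st := fmax, ch := ch,
      hn := hn, hD := hD, hRD := hR, hg := hg, hside := hside, hsep := hsep,
      hst1 := fun i => (hfmaxS' i).1,
      hst2 := fun i => (hfmaxS' i).2.1,
      hC3 := hC3g,
      hC4 := fun i => (hfmaxS' i).2.2.2,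
      hch := hch,
      hopt := by
        intro st' hst'
        have hmem : st' ∈ S := by
          rw [hSdef]
          intro i
          refine ⟨(hst' i).1, (hst' i).2.1, ?_, (hst' i).2.2.2⟩
          rw [hGg i _ (hst' i).1, hGg (i + 1) _ (hst' i).2.1]
          exact (hst' i).2.2.1
        exact hfmax hmem } with hc
  exact c.conclusion
end

section
/- Consider the natural action of the Baumslag–Solitar group BS(1,k) = ℤ[1/k] ⋊ ℤ on X = Π_ℤ ℤ/kℤ with the product of uniform measures μ (ℤ[1/k] acting by k-adic odometer-type additions and ℤ by shift), and let S = {δ₀, 1_ℤ} be the standard generating set of ℤ/kℤ ≀ ℤ acting on X with the same orbits. Then for every g ∈ BS(1,k) with word length |g|_T (T = {1_{ℤ[1/k]}, 1_ℤ}) and every M ≥ 0, μ({x ∈ X : d_{S^±}(g·x, x) ≥ (k+1)(2|g|_T + 2M + 3)}) ≤ k^{−M+1}, where d_{S^±}(x,y) is the word-length of the unique lamplighter element carrying x to y. -/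
open MeasureTheory

attribute [local instance] Classical.propDecidable

noncomputable section

/-- The shift `(0,1) ∈ BS(1,k)` (and of the lamplighter) on `X = Π_ℤ ℤ/kℤ`. -/
def shiftMap (k : ℕ) (x : ℤ → ZMod k) : ℤ → ZMod k := fun i => x (i - 1)

/-- Inverse shift. -/
def shiftInvMap (k : ℕ) (x : ℤ → ZMod k) : ℤ → ZMod k := fun i => x (i + 1)

/-- The lamplighter generator `δ₀`: increment the lamp at position `0`. -/
def lampMap (k : ℕ) (x : ℤ → ZMod k) : ℤ → ZMod k := Function.update x 0 (x 0 + 1)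

/-- Inverse of `lampMap`. -/
def lampInvMap (k : ℕ) (x : ℤ → ZMod k) : ℤ → ZMod k := Function.update x 0 (x 0 - 1)

/-- The `k`-adic odometer: the action of `1 ∈ ℤ[1/k] ≤ BS(1,k)`, adding `1` at position
`0` with carries to the right. -/
def odoMap (k : ℕ) (x : ℤ → ZMod k) : ℤ → ZMod k :=
  if h : ∃ j : ℕ, x j ≠ -1 then
    fun i => if i = (Nat.find h : ℤ) then x i + 1
      else if 0 ≤ i ∧ i < (Nat.find h : ℤ) then 0 else x i
  else fun i => if 0 ≤ i then 0 else x i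

/-- The inverse odometer: the action of `-1 ∈ ℤ[1/k]`. -/
def odoInvMap (k : ℕ) (x : ℤ → ZMod k) : ℤ → ZMod k :=
  if h : ∃ j : ℕ, x j ≠ 0 then
    fun i => if i = (Nat.find h : ℤ) then x i - 1
      else if 0 ≤ i ∧ i < (Nat.find h : ℤ) then -1 else x i
  else fun i => if 0 ≤ i then -1 else x i

/-- The four generators `T^± = {a^{±1}, t^{±1}}` of `BS(1,k)` acting on `X`. -/
def bsGens (k : ℕ) : Set ((ℤ → ZMod k) → ℤ → ZMod k) :=
  {odoMap k, odoInvMap k, shiftMap k, shiftInvMap k}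

/-- The four generators `S^± = {δ₀^{±1}, t^{±1}}` of the lamplighter `ℤ/kℤ ≀ ℤ`
acting on `X`. -/
def lampGens (k : ℕ) : Set ((ℤ → ZMod k) → ℤ → ZMod k) :=
  {lampMap k, lampInvMap k, shiftMap k, shiftInvMap k}

/-- `d_{S^±}(x,y)`: the word length of the (a.e. unique) lamplighter element carrying
`x` to `y`, i.e. the Schreier distance of `x, y` with respect to the lamplighter
generators. -/
def lampDist (k : ℕ) (x y : ℤ → ZMod k) : ℕ :=
  sInf {n : ℕ | ∃ l : List ((ℤ → ZMod k) → ℤ → ZMod k),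
    l.length = n ∧ (∀ f ∈ l, f ∈ lampGens k) ∧ l.foldr (fun f z => f z) x = y}

/-!
An element of `BS(1,k)` of word length `n` acts as `x ↦ σ^m (x + b·k^{-n})` with `|m| ≤ n` and
`|b| < k^{2n}`, where `σ` is the shift and `+` is `k`-adic addition. Such an addition can change a
digit at a place `≥ n + M` only if its carry runs through the whole window `[n, n + M)`, which
forces all digits there to be `-1` (or all to be `0`): two cylinders of measure `k^{-M}` each. Off
them, `g·x` is `x` changed inside `[-n, n + M)` and then shifted by `|m| ≤ n`, and the lamplighter
produces it by walking across the window once, setting each lamp on the way, in at most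
`(2n + M)(k + 1)` steps.
-/

namespace BSLamplighter

open Finset

lemma emod_mul_eq_emod_add_mul {x a b : ℤ} (ha : 0 < a) (hb : 0 < b) :
    x % (a * b) = x % a + a * (x / a % b) := by
  have hx : x % a + a * (x / a % b) + a * b * (x / a / b) = x := by
    linear_combination Int.emod_add_mul_ediv x a + a * Int.emod_add_mul_ediv (x / a) b
  have h0 : 0 ≤ x % a + a * (x / a % b) := by
    have := Int.emod_nonneg x ha.ne'
    have := Int.emod_nonneg (x / a) hb.ne'
    positivity
  have h1 : x % a + a * (x / a % b) < a * b := by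
    have := Int.emod_lt_of_pos x ha
    have := Int.emod_lt_of_pos (x / a) hb
    nlinarith
  rw [← Int.emod_eq_of_lt h0 h1]
  conv_lhs => rw [← hx]
  exact Int.add_mul_emod_self_left _ _ _

lemma val_add_val_neg_one_sub {k : ℕ} [NeZero k] (a : ZMod k) :
    ((a.val : ℤ) + ((-1 - a).val : ℤ)) = k - 1 := by
  have hk : 0 < k := Nat.pos_of_neZero k
  have ha := ZMod.val_lt a
  have h : -1 - a = ((k - 1 - a.val : ℕ) : ZMod k) := by
    rw [Nat.cast_sub (by omega), Nat.cast_sub (by omega : 1 ≤ k), ZMod.natCast_self,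
      ZMod.natCast_zmod_val, Nat.cast_one, zero_sub]
  rw [h, ZMod.val_cast_of_lt (by omega)]
  omega

variable {k : ℕ}

def truncValue (k : ℕ) (x : ℕ → ZMod k) (i : ℕ) : ℤ :=
  ∑ j ∈ range i, ((x j).val : ℤ) * (k : ℤ) ^ j

/-- Digit `i` of the `k`-adic integer `a + x`: the carry into place `i` is
`⌊(a + truncValue k x i) / k^i⌋`. -/
def kadicAdd (k : ℕ) (a : ℤ) (x : ℕ → ZMod k) (i : ℕ) : ZMod k :=
  x i + (((a + truncValue k x i) / (k : ℤ) ^ i : ℤ) : ZMod k)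

section truncValue

variable (x : ℕ → ZMod k)

lemma truncValue_succ (i : ℕ) :
    truncValue k x (i + 1) = truncValue k x i + ((x i).val : ℤ) * (k : ℤ) ^ i :=
  sum_range_succ _ _

lemma truncValue_succ' (i : ℕ) :
    truncValue k x (i + 1) = ((x 0).val : ℤ) + k * truncValue k (fun j => x (j + 1)) i := by
  simp only [truncValue, sum_range_succ', mul_sum, pow_succ, pow_zero, mul_one]
  rw [add_comm]
  congr 1
  refine sum_congr rfl fun j _ => ?_
  ring

lemma truncValue_nonneg (i : ℕ) : 0 ≤ truncValue k x i :=
  sum_nonneg fun _ _ => by positivity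

lemma pow_le_truncValue {q i : ℕ} (hq : q < i) (hx : x q ≠ 0) :
    (k : ℤ) ^ q ≤ truncValue k x i := by
  have hval : (1 : ℤ) ≤ (x q).val := by exact_mod_cast ZMod.val_pos.mpr hx
  calc (k : ℤ) ^ q ≤ ((x q).val : ℤ) * (k : ℤ) ^ q := le_mul_of_one_le_left (by positivity) hval
    _ ≤ truncValue k x i :=
      single_le_sum (f := fun j => ((x j).val : ℤ) * (k : ℤ) ^ j) (fun _ _ => by positivity)
        (mem_range.mpr hq)

variable [NeZero k]

lemma truncValue_add_truncValue_neg_one_sub (i : ℕ) :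
    truncValue k x i + truncValue k (fun j => -1 - x j) i = (k : ℤ) ^ i - 1 := by
  simp only [truncValue, ← sum_add_distrib, ← add_mul, val_add_val_neg_one_sub]
  rw [← mul_sum, mul_comm, geom_sum_mul]

lemma truncValue_lt (i : ℕ) : truncValue k x i < (k : ℤ) ^ i := by
  linarith [truncValue_add_truncValue_neg_one_sub x i, truncValue_nonneg (fun j => -1 - x j) i]

lemma truncValue_add_pow_lt {q i : ℕ} (hq : q < i) (hx : x q ≠ -1) :
    truncValue k x i + (k : ℤ) ^ q < (k : ℤ) ^ i := by
  have := pow_le_truncValue (fun j => -1 - x j) hq (sub_ne_zero.mpr hx.symm)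
  linarith [truncValue_add_truncValue_neg_one_sub x i]

end truncValue

lemma kadicAdd_eq_self {a : ℤ} {x : ℕ → ZMod k} {i : ℕ} (h0 : 0 ≤ a + truncValue k x i)
    (h1 : a + truncValue k x i < (k : ℤ) ^ i) : kadicAdd k a x i = x i := by
  simp [kadicAdd, Int.ediv_eq_zero_of_lt h0 h1]

section kadicAdd

variable [NeZero k]

lemma kadicAdd_zero (x : ℕ → ZMod k) : kadicAdd k 0 x = x :=
  funext fun i => kadicAdd_eq_self (by simpa using truncValue_nonneg x i)
    (by simpa using truncValue_lt x i)

lemma val_kadicAdd (a : ℤ) (x : ℕ → ZMod k) (i : ℕ) :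
    ((kadicAdd k a x i).val : ℤ) = ((a + truncValue k x i) / (k : ℤ) ^ i + (x i).val) % k := by
  rw [← ZMod.val_intCast, kadicAdd, Int.cast_add, Int.cast_natCast, ZMod.natCast_zmod_val,
    add_comm]

lemma truncValue_kadicAdd (b : ℤ) (x : ℕ → ZMod k) (i : ℕ) :
    truncValue k (kadicAdd k b x) i = (b + truncValue k x i) % (k : ℤ) ^ i := by
  have hk : (0 : ℤ) < k := by exact_mod_cast Nat.pos_of_neZero k
  induction i with
  | zero => simp [truncValue]
  | succ i ih =>
    have hsplit : b + truncValue k x (i + 1)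
        = (b + truncValue k x i) + (k : ℤ) ^ i * (x i).val := by
      rw [truncValue_succ]; ring
    rw [truncValue_succ, ih, val_kadicAdd, pow_succ, emod_mul_eq_emod_add_mul (by positivity) hk,
      hsplit, Int.add_mul_emod_self_left, Int.add_mul_ediv_left _ _ (by positivity), mul_comm]

lemma kadicAdd_kadicAdd (a b : ℤ) (x : ℕ → ZMod k) :
    kadicAdd k a (kadicAdd k b x) = kadicAdd k (a + b) x := by
  funext i
  have hk : (0 : ℤ) < (k : ℤ) ^ i := by
    have := Nat.pos_of_neZero k; positivity
  have hcarry : ((a + (b + truncValue k x i) % (k : ℤ) ^ i) / (k : ℤ) ^ i : ℤ)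
      = (a + b + truncValue k x i) / (k : ℤ) ^ i - (b + truncValue k x i) / (k : ℤ) ^ i := by
    have : a + (b + truncValue k x i) % (k : ℤ) ^ i
        = (a + b + truncValue k x i) + (k : ℤ) ^ i * -((b + truncValue k x i) / (k : ℤ) ^ i) := by
      linear_combination Int.emod_add_mul_ediv (b + truncValue k x i) ((k : ℤ) ^ i)
    rw [this, Int.add_mul_ediv_left _ _ hk.ne']
    ring
  rw [kadicAdd, truncValue_kadicAdd]
  unfold kadicAdd
  rw [hcarry]
  push_cast
  ring

lemma kadicAdd_mul_zero (b : ℤ) (x : ℕ → ZMod k) : kadicAdd k (k * b) x 0 = x 0 := by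
  simp [kadicAdd, truncValue]

lemma kadicAdd_mul_succ (b : ℤ) (x : ℕ → ZMod k) (i : ℕ) :
    kadicAdd k (k * b) x (i + 1) = kadicAdd k b (fun j => x (j + 1)) i := by
  have hk : (0 : ℤ) < k := by exact_mod_cast Nat.pos_of_neZero k
  have hlow : ((x 0).val : ℤ) / k = 0 :=
    Int.ediv_eq_zero_of_lt (by positivity) (by exact_mod_cast ZMod.val_lt (x 0))
  have hcarry : ((k : ℤ) * b + truncValue k x (i + 1)) / (k : ℤ) ^ (i + 1)
      = (b + truncValue k (fun j => x (j + 1)) i) / (k : ℤ) ^ i := by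
    rw [truncValue_succ', pow_succ', ← Int.ediv_ediv_of_nonneg hk.le,
      show (k : ℤ) * b + ((x 0).val + k * truncValue k (fun j => x (j + 1)) i)
        = (x 0).val + k * (b + truncValue k (fun j => x (j + 1)) i) by ring,
      Int.add_mul_ediv_left _ _ hk.ne', hlow, zero_add]
  rw [kadicAdd, kadicAdd, hcarry]

lemma kadicAdd_eq_self_of_abs_le {b : ℤ} {t : ℕ} (hb : |b| ≤ (k : ℤ) ^ t)
    {x : ℕ → ZMod k} {q₁ q₂ i : ℕ} (hq₁ : t ≤ q₁) (hq₁i : q₁ < i) (hx₁ : x q₁ ≠ -1)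
    (hq₂ : t ≤ q₂) (hq₂i : q₂ < i) (hx₂ : x q₂ ≠ 0) : kadicAdd k b x i = x i := by
  have hk1 : (1 : ℤ) ≤ k := by exact_mod_cast NeZero.one_le
  have h₁ := truncValue_add_pow_lt x hq₁i hx₁
  have h₂ := pow_le_truncValue x hq₂i hx₂
  have := pow_le_pow_right₀ hk1 hq₁
  have := pow_le_pow_right₀ hk1 hq₂
  have := truncValue_lt x i
  obtain ⟨hb₁, hb₂⟩ := abs_le.mp hb
  exact kadicAdd_eq_self (by linarith) (by linarith)

lemma one_add_truncValue_ediv (x : ℕ → ZMod k) (i : ℕ) :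
    (1 + truncValue k x i) / (k : ℤ) ^ i = if ∀ j < i, x j = -1 then 1 else 0 := by
  split_ifs with h
  · have hneg : truncValue k (fun j => -1 - x j) i = 0 :=
      sum_eq_zero fun j hj => by simp [h j (mem_range.mp hj)]
    have := truncValue_add_truncValue_neg_one_sub x i
    rw [show 1 + truncValue k x i = (k : ℤ) ^ i by linarith]
    exact Int.ediv_self (pow_ne_zero _ (by exact_mod_cast NeZero.ne k))
  · push Not at h
    obtain ⟨j, hj, hxj⟩ := h
    have := truncValue_add_pow_lt x hj hxj
    have := truncValue_nonneg x i
    have : (0 : ℤ) < (k : ℤ) ^ j := by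
      have := Nat.pos_of_neZero k; positivity
    exact Int.ediv_eq_zero_of_lt (by linarith) (by linarith)

lemma neg_one_add_truncValue_ediv (x : ℕ → ZMod k) (i : ℕ) :
    (-1 + truncValue k x i) / (k : ℤ) ^ i = if ∀ j < i, x j = 0 then -1 else 0 := by
  have hk : (0 : ℤ) < (k : ℤ) ^ i := by
    have := Nat.pos_of_neZero k; positivity
  split_ifs with h
  · have : truncValue k x i = 0 := sum_eq_zero fun j hj => by simp [h j (mem_range.mp hj)]
    rw [this, add_zero]
    exact Int.ediv_eq_neg_one_of_neg_of_le (by norm_num) (by linarith)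
  · push Not at h
    obtain ⟨j, hj, hxj⟩ := h
    have := pow_le_truncValue x hj hxj
    have := truncValue_lt x i
    have : (1 : ℤ) ≤ (k : ℤ) ^ j := one_le_pow₀ (by exact_mod_cast NeZero.one_le)
    exact Int.ediv_eq_zero_of_lt (by linarith) (by linarith)

end kadicAdd

def shiftBy (k : ℕ) (m : ℤ) (x : ℤ → ZMod k) : ℤ → ZMod k := fun t => x (t - m)

/-- Addition of `b · k^β` to `x`, read as a `k`-adic expansion with digit `x t` at place `t`;
places below `β` are untouched. -/
def addAt (k : ℕ) (b β : ℤ) (x : ℤ → ZMod k) : ℤ → ZMod k := fun t =>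
  if β ≤ t then kadicAdd k b (fun j => x (β + j)) (t - β).toNat else x t

lemma shiftBy_zero (x : ℤ → ZMod k) : shiftBy k 0 x = x := by
  funext t; simp [shiftBy]

lemma shiftBy_shiftBy (a b : ℤ) (x : ℤ → ZMod k) :
    shiftBy k a (shiftBy k b x) = shiftBy k (a + b) x := by
  funext t; simp only [shiftBy]; congr 1; ring

lemma shiftMap_eq_shiftBy : shiftMap k = shiftBy k 1 := rfl

lemma shiftInvMap_eq_shiftBy : shiftInvMap k = shiftBy k (-1) := by
  funext x t; simp [shiftInvMap, shiftBy]

lemma shiftBy_update (m p : ℤ) (c : ZMod k) (x : ℤ → ZMod k) :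
    shiftBy k m (Function.update x p c) = Function.update (shiftBy k m x) (p + m) c := by
  funext t
  simp only [shiftBy, Function.update_apply, sub_eq_iff_eq_add]

lemma addAt_of_lt {b β t : ℤ} (x : ℤ → ZMod k) (ht : t < β) : addAt k b β x t = x t :=
  if_neg (not_le.mpr ht)

lemma addAt_shiftBy (b β m : ℤ) (x : ℤ → ZMod k) :
    addAt k b β (shiftBy k m x) = shiftBy k m (addAt k b (β - m) x) := by
  funext t
  simp only [addAt, shiftBy]
  rcases le_or_gt β t with h | h
  · rw [if_pos h, if_pos (by omega)]
    congr 1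
    · funext j; congr 1; ring
    · omega
  · rw [if_neg (by omega), if_neg (by omega)]

def carryMap (k : ℕ) (e c : ZMod k) (g : ZMod k → ZMod k) (x : ℤ → ZMod k) : ℤ → ZMod k :=
  if h : ∃ j : ℕ, x j ≠ e then
    fun i => if i = (Nat.find h : ℤ) then g (x i)
      else if 0 ≤ i ∧ i < (Nat.find h : ℤ) then c else x i
  else fun i => if 0 ≤ i then c else x i

lemma odoMap_eq_carryMap : odoMap k = carryMap k (-1) 0 (· + 1) := rfl

lemma odoInvMap_eq_carryMap : odoInvMap k = carryMap k 0 (-1) (· - 1) := rfl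

lemma carryMap_apply {e c : ZMod k} {g : ZMod k → ZMod k} (hg : g e = c) (x : ℤ → ZMod k)
    (t : ℤ) : carryMap k e c g x t
      = if 0 ≤ t ∧ ∀ j : ℕ, (j : ℤ) < t → x j = e then g (x t) else x t := by
  unfold carryMap
  by_cases h : ∃ j : ℕ, x j ≠ e
  · have hmin : ∀ j : ℕ, j < Nat.find h → x j = e := fun j hj => not_not.mp (Nat.find_min h hj)
    have hcond : (0 ≤ t ∧ ∀ j : ℕ, (j : ℤ) < t → x j = e) ↔ 0 ≤ t ∧ t ≤ Nat.find h :=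
      ⟨fun ⟨h0, hall⟩ => ⟨h0, not_lt.mp fun hlt => Nat.find_spec h (hall _ hlt)⟩,
        fun ⟨h0, hle⟩ => ⟨h0, fun j hj => hmin j (by omega)⟩⟩
    rw [dif_pos h, if_congr hcond rfl rfl]
    split_ifs <;> first | rfl | omega | skip
    rw [show t = (t.toNat : ℤ) by omega, hmin _ (by omega), hg]
  · rw [dif_neg h]
    push Not at h
    split_ifs with h₁ h₂ h₂ <;> first | rfl | omega | skip
    · rw [show t = (t.toNat : ℤ) by omega, h, hg]
    · exact absurd ⟨h₁, fun j _ => h j⟩ h₂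

lemma addAt_apply_of_le {b β t : ℤ} (x : ℤ → ZMod k) (ht : β ≤ t) :
    addAt k b β x t = x t + (((b + truncValue k (fun j => x (β + j)) (t - β).toNat)
      / (k : ℤ) ^ (t - β).toNat : ℤ) : ZMod k) := by
  rw [addAt, if_pos ht, kadicAdd, show β + ((t - β).toNat : ℤ) = t by omega]

section addAt

variable [NeZero k]

lemma addAt_zero (β : ℤ) (x : ℤ → ZMod k) : addAt k 0 β x = x := by
  funext t
  unfold addAt
  split_ifs with h
  · rw [kadicAdd_zero]; congr 1; omega
  · rfl

lemma addAt_addAt (a b β : ℤ) (x : ℤ → ZMod k) :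
    addAt k a β (addAt k b β x) = addAt k (a + b) β x := by
  funext t
  unfold addAt
  split_ifs with h
  · have e : (fun j : ℕ => if β ≤ β + (j : ℤ) then
        kadicAdd k b (fun j' => x (β + j')) (β + (j : ℤ) - β).toNat else x (β + j))
        = kadicAdd k b (fun j' => x (β + j')) := by
      funext j
      rw [if_pos (by omega)]
      congr 1
      omega
    rw [e, kadicAdd_kadicAdd]
  · rfl

lemma addAt_mul (b β : ℤ) (x : ℤ → ZMod k) :
    addAt k ((k : ℤ) * b) (β - 1) x = addAt k b β x := by
  funext t
  unfold addAt
  rcases lt_trichotomy t (β - 1) with h | rfl | h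
  · rw [if_neg (by omega), if_neg (by omega)]
  · rw [if_pos le_rfl, if_neg (by omega), sub_self, Int.toNat_zero, kadicAdd_mul_zero,
      Nat.cast_zero, add_zero]
  · rw [if_pos (by omega), if_pos (by omega), show (t - (β - 1)).toNat = (t - β).toNat + 1 by omega,
      kadicAdd_mul_succ]
    congr 1
    funext j
    congr 1
    push_cast
    ring

lemma addAt_pow_mul (b β : ℤ) (s : ℕ) (x : ℤ → ZMod k) :
    addAt k ((k : ℤ) ^ s * b) (β - s) x = addAt k b β x := by
  induction s with
  | zero => simp
  | succ s ih =>
    rw [pow_succ', mul_assoc, show β - ((s + 1 : ℕ) : ℤ) = β - s - 1 by push_cast; ring,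
      addAt_mul, ih]

lemma odoMap_eq_addAt (x : ℤ → ZMod k) : odoMap k x = addAt k 1 0 x := by
  funext t
  rw [odoMap_eq_carryMap, carryMap_apply (by ring)]
  rcases lt_or_ge t 0 with ht | ht
  · rw [if_neg (by omega), addAt_of_lt x ht]
  · simp only [addAt_apply_of_le x ht, one_add_truncValue_ediv, zero_add, sub_zero]
    by_cases hall : ∀ j : ℕ, (j : ℤ) < t → x j = -1
    · rw [if_pos ⟨ht, hall⟩, if_pos fun j hj => hall j (by omega)]
      simp
    · rw [if_neg fun h => hall h.2, if_neg fun h => hall fun j hj => h j (by omega)]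
      simp

lemma odoInvMap_eq_addAt (x : ℤ → ZMod k) : odoInvMap k x = addAt k (-1) 0 x := by
  funext t
  rw [odoInvMap_eq_carryMap, carryMap_apply (by ring)]
  rcases lt_or_ge t 0 with ht | ht
  · rw [if_neg (by omega), addAt_of_lt x ht]
  · simp only [addAt_apply_of_le x ht, neg_one_add_truncValue_ediv, zero_add, sub_zero]
    by_cases hall : ∀ j : ℕ, (j : ℤ) < t → x j = 0
    · rw [if_pos ⟨ht, hall⟩, if_pos fun j hj => hall j (by omega)]
      simp [sub_eq_add_neg]
    · rw [if_neg fun h => hall h.2, if_neg fun h => hall fun j hj => h j (by omega)]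
      simp

lemma addAt_eq_self_of_abs_le {b β : ℤ} {τ : ℕ} (hb : |b| ≤ (k : ℤ) ^ τ)
    {x : ℤ → ZMod k} {q₁ q₂ t : ℤ} (hq₁ : β + τ ≤ q₁) (hq₁t : q₁ < t) (hx₁ : x q₁ ≠ -1)
    (hq₂ : β + τ ≤ q₂) (hq₂t : q₂ < t) (hx₂ : x q₂ ≠ 0) : addAt k b β x t = x t := by
  have hshift : ∀ q, β ≤ q → β + ((q - β).toNat : ℤ) = q := fun q hq => by omega
  rw [addAt, if_pos (by omega), kadicAdd_eq_self_of_abs_le hb (q₁ := (q₁ - β).toNat)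
    (q₂ := (q₂ - β).toNat) (by omega) (by omega) (by rwa [hshift q₁ (by omega)]) (by omega)
    (by omega) (by rwa [hshift q₂ (by omega)]), hshift t (by omega)]

end addAt

/-- `F` is `x ↦ σ^m (x + b·k^{-n})` with `|m| ≤ n` and `|b| < k^{2n}`: the shape of the action
of an element of `BS(1,k) = ℤ[1/k] ⋊ ℤ` of word length at most `n`. -/
def BSNormalForm (k n : ℕ) (F : (ℤ → ZMod k) → ℤ → ZMod k) : Prop :=
  ∃ m b : ℤ, |m| ≤ n ∧ |b| < (k : ℤ) ^ (2 * n) ∧ ∀ x, F x = shiftBy k m (addAt k b (-n) x)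

lemma abs_pow_mul_add_mul_lt (hk : 2 ≤ k) {b c : ℤ} {n s : ℕ} (hc : |c| ≤ 1) (hs : s ≤ 2 * n + 1)
    (hb : |b| < (k : ℤ) ^ (2 * n)) : |(k : ℤ) ^ s * c + k * b| < (k : ℤ) ^ (2 * (n + 1)) := by
  have hk0 : (0 : ℤ) ≤ k := by positivity
  have hks : (k : ℤ) ^ s ≤ (k : ℤ) ^ (2 * n + 1) :=
    pow_le_pow_right₀ (by exact_mod_cast (by omega : 1 ≤ k)) hs
  calc |(k : ℤ) ^ s * c + k * b| ≤ (k : ℤ) ^ s * 1 + k * (k ^ (2 * n) - 1) := by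
        refine (abs_add_le _ _).trans (add_le_add ?_ ?_) <;>
          rw [abs_mul, abs_of_nonneg (by positivity)]
        · exact mul_le_mul_of_nonneg_left hc (by positivity)
        · exact mul_le_mul_of_nonneg_left (by linarith [Int.lt_iff_add_one_le.mp hb]) hk0
    _ < 2 * (k : ℤ) ^ (2 * n + 1) := by
        have : (2 : ℤ) ≤ k := by exact_mod_cast hk
        linarith [pow_succ (k : ℤ) (2 * n)]
    _ ≤ (k : ℤ) ^ (2 * (n + 1)) := by
        rw [show 2 * (n + 1) = 2 * n + 1 + 1 by ring, pow_succ _ (2 * n + 1), mul_comm]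
        gcongr
        exact_mod_cast hk

section BSNormalForm

variable [NeZero k]

lemma bsNormalForm_id : BSNormalForm k 0 id :=
  ⟨0, 0, by simp, by simp, fun x => by simp [shiftBy_zero, addAt_zero]⟩

lemma addAt_shiftBy_addAt (c b m : ℤ) (n : ℕ) (hm : m ≤ n + 1) (x : ℤ → ZMod k) :
    addAt k c 0 (shiftBy k m (addAt k b (-n) x))
      = shiftBy k m (addAt k ((k : ℤ) ^ (n + 1 - m).toNat * c + k * b) (-(n + 1 : ℕ)) x) := by
  rw [addAt_shiftBy, ← addAt_pow_mul c (0 - m) (n + 1 - m).toNat, ← addAt_mul b (-n),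
    show 0 - m - ((n + 1 - m).toNat : ℤ) = -(n + 1 : ℕ) by omega,
    show -(n : ℤ) - 1 = -(n + 1 : ℕ) by push_cast; ring, addAt_addAt]

lemma BSNormalForm.comp (hk : 2 ≤ k) {n : ℕ} {F : (ℤ → ZMod k) → ℤ → ZMod k}
    (hF : BSNormalForm k n F) {f : (ℤ → ZMod k) → ℤ → ZMod k} (hf : f ∈ bsGens k) :
    BSNormalForm k (n + 1) (f ∘ F) := by
  obtain ⟨m, b, hm, hb, hFx⟩ := hF
  obtain ⟨hm₁, hm₂⟩ := abs_le.mp hm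
  have hshift : ∀ d : ℤ, |d| ≤ 1 → BSNormalForm k (n + 1) (fun x => shiftBy k d (F x)) := by
    intro d hd
    refine ⟨d + m, k * b, (abs_add_le _ _).trans (by push_cast; linarith), ?_, fun x => ?_⟩
    · simpa using abs_pow_mul_add_mul_lt hk (c := 0) (s := 0) (by simp) (by omega) hb
    · show shiftBy k d (F x) = _
      rw [hFx, shiftBy_shiftBy, ← addAt_mul b (-n),
        show -(n : ℤ) - 1 = -(n + 1 : ℕ) by push_cast; ring]
  have hodo : ∀ c : ℤ, |c| ≤ 1 → BSNormalForm k (n + 1) (fun x => addAt k c 0 (F x)) := by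
    intro c hc
    refine ⟨m, (k : ℤ) ^ (n + 1 - m).toNat * c + k * b, by push_cast; linarith,
      abs_pow_mul_add_mul_lt hk hc (by omega) hb, fun x => ?_⟩
    show addAt k c 0 (F x) = _
    rw [hFx, addAt_shiftBy_addAt c b m n (by linarith)]
  simp only [bsGens, Set.mem_insert_iff, Set.mem_singleton_iff] at hf
  rcases hf with rfl | rfl | rfl | rfl
  · simpa [Function.comp_def, odoMap_eq_addAt] using hodo 1 (by simp)
  · simpa [Function.comp_def, odoInvMap_eq_addAt] using hodo (-1) (by simp)
  · simpa [Function.comp_def, shiftMap_eq_shiftBy] using hshift 1 (by simp)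
  · simpa [Function.comp_def, shiftInvMap_eq_shiftBy] using hshift (-1) (by simp)

lemma bsNormalForm_foldr (hk : 2 ≤ k) (l : List ((ℤ → ZMod k) → ℤ → ZMod k))
    (hl : ∀ f ∈ l, f ∈ bsGens k) :
    BSNormalForm k l.length (fun x => l.foldr (fun f z => f z) x) := by
  induction l with
  | nil => exact bsNormalForm_id
  | cons f l ih =>
    exact (ih fun g hg => hl g (List.mem_cons_of_mem f hg)).comp hk (hl f List.mem_cons_self)

end BSNormalForm

def LampReachable (k n : ℕ) (x y : ℤ → ZMod k) : Prop :=
  ∃ l : List ((ℤ → ZMod k) → ℤ → ZMod k),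
    l.length ≤ n ∧ (∀ f ∈ l, f ∈ lampGens k) ∧ l.foldr (fun f z => f z) x = y

lemma shiftMap_mem_lampGens : shiftMap k ∈ lampGens k := by simp [lampGens]

lemma shiftInvMap_mem_lampGens : shiftInvMap k ∈ lampGens k := by simp [lampGens]

lemma lampMap_mem_lampGens : lampMap k ∈ lampGens k := by simp [lampGens]

lemma lampDist_le_of_lampReachable {n : ℕ} {x y : ℤ → ZMod k} (h : LampReachable k n x y) :
    lampDist k x y ≤ n := by
  obtain ⟨l, hln, hl, rfl⟩ := h
  exact (Nat.sInf_le (Set.mem_ofPred.mpr ⟨l, rfl, hl, rfl⟩)).trans hln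

lemma lampReachable_refl (x : ℤ → ZMod k) : LampReachable k 0 x x :=
  ⟨[], le_rfl, by simp, rfl⟩

lemma lampReachable_gen {f : (ℤ → ZMod k) → ℤ → ZMod k} (hf : f ∈ lampGens k)
    (x : ℤ → ZMod k) : LampReachable k 1 x (f x) :=
  ⟨[f], le_rfl, by simpa using hf, rfl⟩

lemma LampReachable.trans {a b : ℕ} {x y z : ℤ → ZMod k} (hxy : LampReachable k a x y)
    (hyz : LampReachable k b y z) : LampReachable k (a + b) x z := by
  obtain ⟨l₁, hl₁, hg₁, rfl⟩ := hxy
  obtain ⟨l₂, hl₂, hg₂, rfl⟩ := hyz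
  refine ⟨l₂ ++ l₁, by simp only [List.length_append]; omega, fun f hf => ?_, List.foldr_append⟩
  rcases List.mem_append.mp hf with h | h
  exacts [hg₂ f h, hg₁ f h]

lemma LampReachable.mono {a b : ℕ} {x y : ℤ → ZMod k} (h : LampReachable k a x y)
    (hab : a ≤ b) : LampReachable k b x y := by
  obtain ⟨l, hl, hg, rfl⟩ := h
  exact ⟨l, hl.trans hab, hg, rfl⟩

lemma lampReachable_shiftBy (a d : ℤ) (x : ℤ → ZMod k) :
    LampReachable k d.natAbs (shiftBy k a x) (shiftBy k (a + d) x) := by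
  induction d with
  | zero => simpa using lampReachable_refl _
  | succ i ih =>
    have := ih.trans (lampReachable_gen shiftMap_mem_lampGens (shiftBy k (a + i) x))
    rw [shiftMap_eq_shiftBy, shiftBy_shiftBy] at this
    convert this using 2 <;> [omega; ring]
  | pred i ih =>
    have := ih.trans (lampReachable_gen shiftInvMap_mem_lampGens (shiftBy k (a + -i) x))
    rw [shiftInvMap_eq_shiftBy, shiftBy_shiftBy] at this
    convert this using 2 <;> [omega; ring]

lemma lampReachable_shiftBy_shiftBy (a b : ℤ) (x : ℤ → ZMod k) :
    LampReachable k (b - a).natAbs (shiftBy k a x) (shiftBy k b x) := by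
  simpa using lampReachable_shiftBy a (b - a) x

section lampDist

variable [NeZero k]

lemma lampReachable_update_zero (x : ℤ → ZMod k) (c : ZMod k) :
    LampReachable k (k - 1) x (Function.update x 0 c) := by
  have hlamps : ∀ v : ℕ, LampReachable k v x (Function.update x 0 (x 0 + v)) := by
    intro v
    induction v with
    | zero => simpa using lampReachable_refl x
    | succ v ih =>
      have := ih.trans (lampReachable_gen lampMap_mem_lampGens _)
      rwa [lampMap, Function.update_idem, Function.update_self, add_assoc, ← Nat.cast_succ] at this
  have := (hlamps (c - x 0).val).mono (Nat.le_sub_one_of_lt (ZMod.val_lt _))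
  rwa [ZMod.natCast_zmod_val, add_sub_cancel] at this

lemma lampReachable_sweep {d : ℤ} (hd : d.natAbs = 1) (r : ℕ) :
    ∀ (p : ℤ) (x z : ℤ → ZMod k), (∀ t, z t ≠ x t → ∃ j : ℕ, j < r ∧ t = p + d * j) →
      LampReachable k (r * k) (shiftBy k (-p) x) (shiftBy k (-(p + d * r)) z) := by
  induction r with
  | zero =>
    intro p x z hz
    have : z = x := funext fun t => by_contra fun h => by simpa using hz t h
    simpa [this] using lampReachable_refl _
  | succ r ih =>
    intro p x z hz
    set x' := Function.update x p (z p)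
    have hfix : LampReachable k (k - 1) (shiftBy k (-p) x) (shiftBy k (-p) x') := by
      simpa [x', shiftBy_update] using lampReachable_update_zero (shiftBy k (-p) x) (z p)
    have hmove : LampReachable k 1 (shiftBy k (-p) x') (shiftBy k (-(p + d)) x') := by
      have := lampReachable_shiftBy (k := k) (-p) (-d) x'
      rwa [Int.natAbs_neg, hd, ← neg_add] at this
    have hrest := ih (p + d) x' z fun t ht => by
      have htp : t ≠ p := fun h => ht (by simp [x', h])
      obtain ⟨j, hj, rfl⟩ := hz t (by simpa [x', Function.update_apply, htp] using ht)
      rcases j with _ | j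
      · simp at htp
      · exact ⟨j, by omega, by push_cast; ring⟩
    have := (hfix.trans hmove).trans hrest
    rw [show p + d + d * r = p + d * (r + 1 : ℕ) by push_cast; ring] at this
    exact this.mono (by rw [Nat.succ_mul]; have : 1 ≤ k := NeZero.one_le; omega)

/-- Sweeping the window `[-n, n + M)` from the end farther from the target position `-m`
keeps the walk within `(2n + M)(k + 1)` steps. -/
lemma lampDist_shiftBy_le {x z : ℤ → ZMod k} {n M : ℕ} {m : ℤ} (hm : |m| ≤ n)
    (hz : ∀ t, z t ≠ x t → -(n : ℤ) ≤ t ∧ t < n + M) :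
    lampDist k x (shiftBy k m z) ≤ (2 * n + M) * (k + 1) := by
  obtain ⟨hm₁, hm₂⟩ := abs_le.mp hm
  apply lampDist_le_of_lampReachable
  rcases le_or_gt m 0 with hm0 | hm0
  · have hsweep : LampReachable k ((2 * n + M) * k) (shiftBy k n x) (shiftBy k (-(n + M)) z) := by
      have := lampReachable_sweep (d := 1) rfl (2 * n + M) (-n) x z fun t ht =>
        ⟨(t + n).toNat, by have := hz t ht; omega, by have := hz t ht; omega⟩
      convert this using 2 <;> push_cast <;> ring
    have := ((lampReachable_shiftBy_shiftBy 0 n x).trans hsweep).trans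
      (lampReachable_shiftBy_shiftBy _ m z)
    rw [shiftBy_zero] at this
    exact this.mono (by rw [Nat.mul_succ]; omega)
  · have hsweep : LampReachable k ((2 * n + M) * k) (shiftBy k (-(n + M - 1)) x)
        (shiftBy k (n + 1) z) := by
      have := lampReachable_sweep (d := -1) rfl (2 * n + M) (n + M - 1) x z fun t ht =>
        ⟨(n + M - 1 - t).toNat, by have := hz t ht; omega, by have := hz t ht; omega⟩
      convert this using 2; push_cast; ring
    have := ((lampReachable_shiftBy_shiftBy 0 _ x).trans hsweep).trans
      (lampReachable_shiftBy_shiftBy _ m z)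
    rw [shiftBy_zero] at this
    exact this.mono (by rw [Nat.mul_succ]; omega)

lemma lampDist_foldr_bsGens_le (hk : 2 ≤ k) (l : List ((ℤ → ZMod k) → ℤ → ZMod k))
    (hl : ∀ f ∈ l, f ∈ bsGens k) (M : ℕ) {x : ℤ → ZMod k} {q₁ q₂ : ℤ}
    (hq₁ : l.length ≤ q₁ ∧ q₁ < l.length + M) (hx₁ : x q₁ ≠ -1)
    (hq₂ : l.length ≤ q₂ ∧ q₂ < l.length + M) (hx₂ : x q₂ ≠ 0) :
    lampDist k x (l.foldr (fun f z => f z) x) ≤ (2 * l.length + M) * (k + 1) := by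
  obtain ⟨m, b, hm, hb, hlx⟩ := bsNormalForm_foldr hk l hl
  rw [show l.foldr (fun f z => f z) x = _ from hlx x]
  refine lampDist_shiftBy_le hm fun t ht => ⟨not_lt.mp fun h => ht (addAt_of_lt x h),
    not_le.mp fun h => ht (addAt_eq_self_of_abs_le hb.le ?_ (hq₁.2.trans_le h) hx₁ ?_
      (hq₂.2.trans_le h) hx₂)⟩ <;> push_cast <;> linarith

end lampDist

end BSLamplighter

open BSLamplighter

/-- For the natural actions of `BS(1,k)` and of `ℤ/kℤ ≀ ℤ` on `X = Π_ℤ ℤ/kℤ` with the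
product of uniform measures: for every `g ∈ BS(1,k)` given by a word `l` in `T^±` (so
`|g|_T ≤ l.length`, with equality for a minimal word) and every `M ≥ 0`,
`μ({x : d_{S^±}(g·x,x) ≥ (k+1)(2|g|_T + 2M + 3)}) ≤ k^{−M+1}`. -/
theorem bs_lamplighter_integrability_estimate
    (k : ℕ) (hk : 2 ≤ k) [MeasurableSpace (ZMod k)]
    (μ : Measure (ℤ → ZMod k))
    (hμ : ∀ (J : Finset ℤ) (y : ℤ → ZMod k),
      μ {x | ∀ i ∈ J, x i = y i} = ((k : ENNReal))⁻¹ ^ J.card)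
    (l : List ((ℤ → ZMod k) → ℤ → ZMod k)) (hl : ∀ f ∈ l, f ∈ bsGens k)
    (M : ℕ) :
    μ {x | (k + 1) * (2 * l.length + 2 * M + 3)
        ≤ lampDist k x (l.foldr (fun f z => f z) x)}
      ≤ (k : ENNReal) * ((k : ENNReal)⁻¹) ^ M := by
  have : NeZero k := ⟨by omega⟩
  set J := Finset.Ico (l.length : ℤ) (l.length + M)
  have hcyl : ∀ c : ZMod k, μ {x | ∀ i ∈ J, x i = c} = (k : ENNReal)⁻¹ ^ M := fun c => by
    rw [show M = J.card by simp [J]]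
    exact hμ J fun _ => c
  have hbad : {x | (k + 1) * (2 * l.length + 2 * M + 3)
      ≤ lampDist k x (l.foldr (fun f z => f z) x)}
      ⊆ {x | ∀ i ∈ J, x i = -1} ∪ {x | ∀ i ∈ J, x i = 0} := by
    intro x hx
    by_contra hxJ
    simp only [Set.mem_union, Set.mem_ofPred_eq, not_or, not_forall] at hxJ
    obtain ⟨⟨q₁, hq₁, hx₁⟩, q₂, hq₂, hx₂⟩ := hxJ
    have := lampDist_foldr_bsGens_le hk l hl M (Finset.mem_Ico.mp hq₁) hx₁
      (Finset.mem_Ico.mp hq₂) hx₂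
    nlinarith [Set.mem_ofPred.mp hx]
  calc _ ≤ μ ({x | ∀ i ∈ J, x i = -1} ∪ {x | ∀ i ∈ J, x i = 0}) := measure_mono hbad
    _ ≤ μ {x | ∀ i ∈ J, x i = -1} + μ {x | ∀ i ∈ J, x i = 0} := measure_union_le _ _
    _ = 2 * (k : ENNReal)⁻¹ ^ M := by rw [hcyl, hcyl, two_mul]
    _ ≤ (k : ENNReal) * ((k : ENNReal)⁻¹) ^ M := by gcongr; exact_mod_cast hk
end
end
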